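/- arXiv:1504.00565 — 3 statements merged into one kernel-verified Lean document; each statement's English description precedes it below -/
import Mathlib

section
/- For b > 0, let u_b ∈ C^4([0,∞)) be the radial solution in dimension 4 of Δ_4² u = −e^u on (0,∞) with u'(0) = 0, (Δ_4 u)'(0) = 0, (Δ_4 u)(0) = 8 and u(0) = −b. Then lim_{b→+∞} ω_3 ∫_0^∞ e^{u_b(r)} r^3 dr = +∞. -/
set_option maxHeartbeats 1000000


open MeasureTheory Filter Set
open scoped ENNReal

/-- The radial Laplacian in dimension `N`: `(Δ_N u)(r) = u''(r) + ((N-1)/r) u'(r)` for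
`r ≠ 0`, extended by continuity (right-limit) at `r = 0`. -/
noncomputable def rlap (N : ℕ) (u : ℝ → ℝ) : ℝ → ℝ := fun r =>
  if r = 0 then
    limUnder (nhdsWithin 0 (Set.Ioi 0))
      (fun s => deriv (deriv u) s + ((N : ℝ) - 1) / s * deriv u s)
  else deriv (deriv u) r + ((N : ℝ) - 1) / r * deriv u r

/-- `ω_{N-1}`, the surface measure of the unit sphere `S^{N-1} ⊂ ℝ^N`, expressed as
`N` times the volume of the unit ball. -/
noncomputable def sphereVol (N : ℕ) : ℝ :=
  (N : ℝ) * (volume (Metric.ball (0 : EuclideanSpace ℝ (Fin N)) 1)).toReal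

namespace Bih

open intervalIntegral Real

variable (u : ℝ → ℝ)

noncomputable def p : ℝ → ℝ := derivWithin u (Ici 0)
noncomputable def p2 : ℝ → ℝ := derivWithin (p u) (Ici 0)
noncomputable def p3 : ℝ → ℝ := derivWithin (p2 u) (Ici 0)
noncomputable def G : ℝ → ℝ := fun r => r^3 * p3 u r + 3*r^2 * p2 u r - 3*r * p u r
noncomputable def m : ℝ → ℝ := fun r => ∫ s in (0:ℝ)..r, s^3 * Real.exp (u s)

variable {u}

lemma hp (H1 : ContDiffOn ℝ 4 u (Ici 0)) : ContDiffOn ℝ 3 (p u) (Ici 0) :=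
  H1.derivWithin (uniqueDiffOn_Ici 0) (by norm_num)

lemma hp2 (H1 : ContDiffOn ℝ 4 u (Ici 0)) : ContDiffOn ℝ 2 (p2 u) (Ici 0) :=
  (hp H1).derivWithin (uniqueDiffOn_Ici 0) (by norm_num)

lemma hp3 (H1 : ContDiffOn ℝ 4 u (Ici 0)) : ContDiffOn ℝ 1 (p3 u) (Ici 0) :=
  (hp2 H1).derivWithin (uniqueDiffOn_Ici 0) (by norm_num)

lemma deriv_u_eq (H1 : ContDiffOn ℝ 4 u (Ici 0)) {r : ℝ} (hr : 0 < r) :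
    deriv u r = p u r := (derivWithin_of_mem_nhds (Ici_mem_nhds hr)).symm

lemma hasDerivAt_p (H1 : ContDiffOn ℝ 4 u (Ici 0)) {r : ℝ} (hr : 0 < r) :
    HasDerivAt (p u) (p2 u r) r := by
  have hd : DifferentiableAt ℝ (p u) r :=
    (((hp H1).contDiffAt (Ici_mem_nhds hr)).differentiableAt (by norm_num))
  have := hd.hasDerivAt
  rwa [show deriv (p u) r = p2 u r from
    (derivWithin_of_mem_nhds (Ici_mem_nhds hr)).symm] at this

lemma hasDerivAt_p2 (H1 : ContDiffOn ℝ 4 u (Ici 0)) {r : ℝ} (hr : 0 < r) :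
    HasDerivAt (p2 u) (p3 u r) r := by
  have hd : DifferentiableAt ℝ (p2 u) r :=
    (((hp2 H1).contDiffAt (Ici_mem_nhds hr)).differentiableAt (by norm_num))
  have := hd.hasDerivAt
  rwa [show deriv (p2 u) r = p3 u r from
    (derivWithin_of_mem_nhds (Ici_mem_nhds hr)).symm] at this

lemma hasDerivAt_p3 (H1 : ContDiffOn ℝ 4 u (Ici 0)) {r : ℝ} (hr : 0 < r) :
    HasDerivAt (p3 u) (deriv (p3 u) r) r :=
  ((((hp3 H1).contDiffAt (Ici_mem_nhds hr)).differentiableAt (by norm_num))).hasDerivAt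

lemma deriv2_u_eq (H1 : ContDiffOn ℝ 4 u (Ici 0)) {r : ℝ} (hr : 0 < r) :
    deriv (deriv u) r = p2 u r := by
  have he : deriv u =ᶠ[nhds r] p u := by
    filter_upwards [(isOpen_Ioi (a := (0:ℝ))).mem_nhds hr]
      with x hx
    exact deriv_u_eq H1 hx
  rw [he.deriv_eq]
  exact (derivWithin_of_mem_nhds (Ici_mem_nhds hr)).symm

lemma q_eq (H1 : ContDiffOn ℝ 4 u (Ici 0)) {r : ℝ} (hr : 0 < r) :
    rlap 4 u r = p2 u r + 3 * (p u r / r) := by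
  rw [rlap, if_neg hr.ne', deriv2_u_eq H1 hr, deriv_u_eq H1 hr]
  norm_num
  ring

lemma q_tendsto (H1 : ContDiffOn ℝ 4 u (Ici 0)) (H3 : p u 0 = 0) :
    Tendsto (rlap 4 u) (nhdsWithin 0 (Ioi 0)) (nhds (4 * p2 u 0)) ∧
      rlap 4 u 0 = 4 * p2 u 0 := by
  have hslope : Tendsto (fun s => p u s / s) (nhdsWithin 0 (Ioi 0)) (nhds (p2 u 0)) := by
    have hd : HasDerivWithinAt (p u) (p2 u 0) (Ici 0) 0 :=
      ((hp H1).differentiableOn (by norm_num) 0 self_mem_Ici).hasDerivWithinAt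
    rw [hasDerivWithinAt_iff_tendsto_slope] at hd
    rw [Ici_sdiff_left] at hd
    refine hd.congr' ?_
    filter_upwards [self_mem_nhdsWithin] with s hs
    rw [slope_def_field, H3]
    simp
  have hp2c : Tendsto (p2 u) (nhdsWithin 0 (Ioi 0)) (nhds (p2 u 0)) := by
    have := ((hp2 H1).continuousOn 0 self_mem_Ici).tendsto
    exact this.mono_left (nhdsWithin_mono 0 Ioi_subset_Ici_self)
  have htend : Tendsto (fun s => p2 u s + 3 * (p u s / s)) (nhdsWithin 0 (Ioi 0))
      (nhds (4 * p2 u 0)) := by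
    have := hp2c.add ((hslope.const_mul 3))
    convert this using 2
    ring
  have hq_eventually : (rlap 4 u) =ᶠ[nhdsWithin 0 (Ioi 0)]
      (fun s => p2 u s + 3 * (p u s / s)) := by
    filter_upwards [self_mem_nhdsWithin] with s hs
    exact q_eq H1 hs
  have hF_eventually : (fun s => deriv (deriv u) s + (((4:ℕ) : ℝ) - 1) / s * deriv u s)
      =ᶠ[nhdsWithin 0 (Ioi 0)] (fun s => p2 u s + 3 * (p u s / s)) := by
    filter_upwards [self_mem_nhdsWithin] with s hs
    rw [deriv2_u_eq H1 hs, deriv_u_eq H1 hs]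
    norm_num; ring
  constructor
  · exact htend.congr' hq_eventually.symm
  · rw [rlap, if_pos rfl]
    exact (htend.congr' hF_eventually.symm).limUnder_eq

lemma p2_zero (H1 : ContDiffOn ℝ 4 u (Ici 0)) (H3 : p u 0 = 0) (H5 : rlap 4 u 0 = 8) :
    p2 u 0 = 2 := by
  have := (q_tendsto H1 H3).2
  rw [H5] at this; linarith

lemma q_tendsto8 (H1 : ContDiffOn ℝ 4 u (Ici 0)) (H3 : p u 0 = 0) (H5 : rlap 4 u 0 = 8) :
    Tendsto (rlap 4 u) (nhdsWithin 0 (Ioi 0)) (nhds 8) := by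
  have := (q_tendsto H1 H3).1
  rwa [p2_zero H1 H3 H5, show (4:ℝ) * 2 = 8 by norm_num] at this

lemma q_contOn (H1 : ContDiffOn ℝ 4 u (Ici 0)) (H3 : p u 0 = 0) (H5 : rlap 4 u 0 = 8) :
    ContinuousOn (rlap 4 u) (Ici 0) := by
  intro r hr
  rcases eq_or_lt_of_le (α := ℝ) hr with h0 | h0
  · rw [ContinuousWithinAt, ← h0]
    rw [show Ici (0:ℝ) = insert 0 (Ioi 0) by rw [← Ioi_insert], nhdsWithin_insert]
    rw [H5]
    exact tendsto_sup.mpr ⟨H5 ▸ tendsto_pure_nhds (rlap 4 u) 0, q_tendsto8 H1 H3 H5⟩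
  · have hc : ContinuousAt (rlap 4 u) r := by
      have hform : ContinuousAt (fun s => p2 u s + 3 * (p u s / s)) r := by
        have h2 : ContinuousAt (p2 u) r :=
          ((hp2 H1).continuousOn).continuousAt (Ici_mem_nhds h0)
        have h1 : ContinuousAt (p u) r :=
          ((hp H1).continuousOn).continuousAt (Ici_mem_nhds h0)
        exact h2.add ((h1.div continuousAt_id h0.ne').const_mul 3)
      refine hform.congr ?_
      filter_upwards [(isOpen_Ioi (a := (0:ℝ))).mem_nhds h0] with x hx
      exact (q_eq H1 hx).symm
    exact hc.continuousWithinAt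

noncomputable def psi (u : ℝ → ℝ) : ℝ → ℝ := fun r =>
  p3 u r + 3 * ((p2 u r * r - p u r) / r ^ 2)

lemma hasDerivAt_q (H1 : ContDiffOn ℝ 4 u (Ici 0)) {r : ℝ} (hr : 0 < r) :
    HasDerivAt (rlap 4 u) (psi u r) r := by
  have hφ : HasDerivAt (fun x => p2 u x + 3 * (p u x / x)) (psi u r) r := by
    have hdiv : HasDerivAt (fun x => p u x / x)
        ((p2 u r * r - p u r * 1) / r ^ 2) r :=
      (hasDerivAt_p H1 hr).div (hasDerivAt_id r) hr.ne'
    have := (hasDerivAt_p2 H1 hr).add (hdiv.const_mul 3)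
    refine this.congr_deriv ?_
    rw [psi]; ring
  refine hφ.congr_of_eventuallyEq ?_
  filter_upwards [(isOpen_Ioi (a := (0:ℝ))).mem_nhds hr] with x hx
  exact q_eq H1 hx

lemma deriv_q_eq (H1 : ContDiffOn ℝ 4 u (Ici 0)) {r : ℝ} (hr : 0 < r) :
    deriv (rlap 4 u) r = psi u r := (hasDerivAt_q H1 hr).deriv

lemma hasDerivAt_G (H1 : ContDiffOn ℝ 4 u (Ici 0))
    (H2 : ∀ r : ℝ, 0 < r → (rlap 4)^[2] u r = -Real.exp (u r))
    {r : ℝ} (hr : 0 < r) :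
    HasDerivAt (G u) (-(r ^ 3 * Real.exp (u r))) r := by
  set p4 := deriv (p3 u) r with hp4def
  -- derivative of psi at r
  have hψ' : HasDerivAt (psi u)
      (p4 + 3 * ((p3 u r * r * r ^ 2 - (p2 u r * r - p u r) * (2 * r)) / (r ^ 2) ^ 2)) r := by
    have hnum : HasDerivAt (fun x => p2 u x * x - p u x)
        (p3 u r * r + p2 u r * 1 - p2 u r) r :=
      ((hasDerivAt_p2 H1 hr).mul (hasDerivAt_id r)).sub (hasDerivAt_p H1 hr)
    have hden : HasDerivAt (fun x : ℝ => x ^ 2) (2 * r) r := by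
      simpa using hasDerivAt_pow 2 r
    have hdiv : HasDerivAt (fun x => (p2 u x * x - p u x) / x ^ 2)
        ((p3 u r * r * r ^ 2 - (p2 u r * r - p u r) * (2 * r)) / (r ^ 2) ^ 2) r := by
      have := hnum.div hden (show r ^ 2 ≠ 0 by positivity)
      refine this.congr_deriv ?_
      ring
    have := (hasDerivAt_p3 H1 hr).add (hdiv.const_mul 3)
    refine this.congr_deriv ?_
    all_goals ring
  -- the PDE gives an identity
  have hPDE : deriv (deriv (rlap 4 u)) r + 3 / r * deriv (rlap 4 u) r
      = -Real.exp (u r) := by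
    have h2 := H2 r hr
    rw [show (rlap 4)^[2] u = rlap 4 (rlap 4 u) by
          rw [show (2:ℕ) = 1 + 1 from rfl, Function.iterate_succ_apply',
            Function.iterate_one]] at h2
    rw [rlap, if_neg hr.ne'] at h2
    norm_num at h2
    convert h2 using 2
    all_goals ring
  have hderiv_deriv : deriv (deriv (rlap 4 u)) r
      = p4 + 3 * ((p3 u r * r * r ^ 2 - (p2 u r * r - p u r) * (2 * r)) / (r ^ 2) ^ 2) := by
    have he : deriv (rlap 4 u) =ᶠ[nhds r] psi u := by
      filter_upwards [(isOpen_Ioi (a := (0:ℝ))).mem_nhds hr] with x hx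
      exact deriv_q_eq H1 hx
    rw [he.deriv_eq]
    exact hψ'.deriv
  have hkey : (p4 + 3 * ((p3 u r * r * r ^ 2 - (p2 u r * r - p u r) * (2 * r)) / (r ^ 2) ^ 2))
      + 3 / r * psi u r = -Real.exp (u r) := by
    rw [← hderiv_deriv, ← deriv_q_eq H1 hr]
    exact hPDE
  -- now compute derivative of G
  have hG' : HasDerivAt (G u)
      ((3 * r ^ 2) * p3 u r + r ^ 3 * p4 + (3 * (2 * r) * p2 u r + 3 * r ^ 2 * p3 u r)
        - (3 * p u r + 3 * r * p2 u r)) r := by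
    have h1 : HasDerivAt (fun x => x ^ 3 * p3 u x) ((3 * r ^ 2) * p3 u r + r ^ 3 * p4) r := by
      have := (hasDerivAt_pow 3 r).mul (hasDerivAt_p3 H1 hr)
      refine this.congr_deriv ?_
      all_goals push_cast
      all_goals ring
    have h2 : HasDerivAt (fun x => 3 * x ^ 2 * p2 u x)
        (3 * (2 * r) * p2 u r + 3 * r ^ 2 * p3 u r) r := by
      have := (((hasDerivAt_pow 2 r).const_mul 3).mul (hasDerivAt_p2 H1 hr))
      refine this.congr_deriv ?_
      all_goals push_cast
      all_goals ring
    have h3 : HasDerivAt (fun x => 3 * x * p u x) (3 * p u r + 3 * r * p2 u r) r := by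
      have := (((hasDerivAt_id r).const_mul 3).mul (hasDerivAt_p H1 hr))
      refine this.congr_deriv ?_
      simp only [id]
      ring
    exact (h1.add h2).sub h3
  convert hG' using 1
  have hexp : -Real.exp (u r)
      = (p4 + 3 * ((p3 u r * r * r ^ 2 - (p2 u r * r - p u r) * (2 * r)) / (r ^ 2) ^ 2))
      + 3 / r * psi u r := hkey.symm
  rw [show -(r ^ 3 * Real.exp (u r)) = r ^ 3 * (-Real.exp (u r)) by ring, hexp, psi]
  field_simp
  ring

lemma G_contOn (H1 : ContDiffOn ℝ 4 u (Ici 0)) : ContinuousOn (G u) (Ici 0) := by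
  unfold G
  refine ContinuousOn.sub (ContinuousOn.add ?_ ?_) ?_
  · exact (continuousOn_pow 3).mul ((hp3 H1).continuousOn)
  · exact ((continuousOn_const.mul (continuousOn_pow 2))).mul ((hp2 H1).continuousOn)
  · exact (continuousOn_const.mul continuousOn_id).mul ((hp H1).continuousOn)

lemma star1 (H1 : ContDiffOn ℝ 4 u (Ici 0))
    (H2 : ∀ r : ℝ, 0 < r → (rlap 4)^[2] u r = -Real.exp (u r))
    {r : ℝ} (hr : 0 ≤ r) : G u r = -(m u r) := by
  have hG0 : G u 0 = 0 := by unfold G; ring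
  have hint : IntervalIntegrable (fun s => -(s ^ 3 * Real.exp (u s))) volume 0 r := by
    apply ContinuousOn.intervalIntegrable
    apply ContinuousOn.neg
    apply ContinuousOn.mul (continuousOn_pow 3)
    apply (Real.continuous_exp.comp_continuousOn (H1.continuousOn.mono ?_))
    rw [uIcc_of_le hr]
    exact fun x hx => hx.1
  have := integral_eq_sub_of_hasDeriv_right_of_le hr
    ((G_contOn H1).mono (fun x hx => hx.1))
    (fun x hx => (hasDerivAt_G H1 H2 hx.1).hasDerivWithinAt) hint
  rw [hG0] at this
  have hm : ∫ y in (0:ℝ)..r, -(y ^ 3 * Real.exp (u y)) = -(m u r) := by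
    rw [m, intervalIntegral.integral_neg]
  rw [hm] at this
  linarith [this]

lemma hasDerivAt_q_val (H1 : ContDiffOn ℝ 4 u (Ici 0))
    (H2 : ∀ r : ℝ, 0 < r → (rlap 4)^[2] u r = -Real.exp (u r))
    {r : ℝ} (hr : 0 < r) :
    HasDerivAt (rlap 4 u) (-(m u r) / r ^ 3) r := by
  have h := hasDerivAt_q H1 hr
  have : psi u r = -(m u r) / r ^ 3 := by
    rw [← star1 H1 H2 hr.le, psi, G]
    field_simp
    ring
  rwa [this] at h

lemma m_nonneg {r : ℝ} (hr : 0 ≤ r) : 0 ≤ m u r := by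
  apply intervalIntegral.integral_nonneg hr
  intro x hx
  exact mul_nonneg (pow_nonneg hx.1 3) (Real.exp_pos _).le

lemma q_antitone (H1 : ContDiffOn ℝ 4 u (Ici 0))
    (H2 : ∀ r : ℝ, 0 < r → (rlap 4)^[2] u r = -Real.exp (u r))
    (H3 : p u 0 = 0) (H5 : rlap 4 u 0 = 8) :
    AntitoneOn (rlap 4 u) (Ici 0) := by
  apply antitoneOn_of_deriv_nonpos (convex_Ici 0) (q_contOn H1 H3 H5)
  · intro x hx
    rw [interior_Ici] at hx
    exact (hasDerivAt_q H1 hx).differentiableAt.differentiableWithinAt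
  · intro x hx
    rw [interior_Ici] at hx
    rw [(hasDerivAt_q_val H1 H2 hx).deriv]
    apply div_nonpos_of_nonpos_of_nonneg
    · simp [m_nonneg hx.le]
    · exact pow_nonneg (le_of_lt hx) 3

lemma q_le8 (H1 : ContDiffOn ℝ 4 u (Ici 0))
    (H2 : ∀ r : ℝ, 0 < r → (rlap 4)^[2] u r = -Real.exp (u r))
    (H3 : p u 0 = 0) (H5 : rlap 4 u 0 = 8) {r : ℝ} (hr : 0 ≤ r) :
    rlap 4 u r ≤ 8 := by
  have := q_antitone H1 H2 H3 H5 self_mem_Ici hr hr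
  rwa [H5] at this

lemma star2 (H1 : ContDiffOn ℝ 4 u (Ici 0)) (H3 : p u 0 = 0) (H5 : rlap 4 u 0 = 8)
    {r : ℝ} (hr : 0 ≤ r) :
    r ^ 3 * p u r = ∫ s in (0:ℝ)..r, s ^ 3 * rlap 4 u s := by
  have hint : IntervalIntegrable (fun s => s ^ 3 * rlap 4 u s) volume 0 r := by
    apply ContinuousOn.intervalIntegrable
    apply ContinuousOn.mul (continuousOn_pow 3)
    apply (q_contOn H1 H3 H5).mono
    rw [uIcc_of_le hr]
    exact fun x hx => hx.1
  have hcont : ContinuousOn (fun x => x ^ 3 * p u x) (Icc 0 r) :=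
    (continuousOn_pow 3).mul ((hp H1).continuousOn.mono (fun x hx => hx.1))
  have hder : ∀ x ∈ Ioo (0:ℝ) r, HasDerivWithinAt (fun x => x ^ 3 * p u x)
      (x ^ 3 * rlap 4 u x) (Ioi x) x := by
    intro x hx
    have h := ((hasDerivAt_pow 3 x).mul (hasDerivAt_p H1 hx.1)).hasDerivWithinAt (s := Ioi x)
    refine h.congr_deriv ?_
    rw [q_eq H1 hx.1]
    push_cast
    field_simp [hx.1.ne']
    ring
  have := integral_eq_sub_of_hasDeriv_right_of_le hr hcont hder hint
  rw [this, H3]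
  ring

lemma p_le (H1 : ContDiffOn ℝ 4 u (Ici 0))
    (H2 : ∀ r : ℝ, 0 < r → (rlap 4)^[2] u r = -Real.exp (u r))
    (H3 : p u 0 = 0) (H5 : rlap 4 u 0 = 8) {r : ℝ} (hr : 0 ≤ r) :
    p u r ≤ 2 * r := by
  rcases eq_or_lt_of_le hr with h0 | h0
  · rw [← h0, H3]; norm_num
  · have hint : IntervalIntegrable (fun s => s ^ 3 * rlap 4 u s) volume 0 r := by
      apply ContinuousOn.intervalIntegrable
      apply ContinuousOn.mul (continuousOn_pow 3)
      exact (q_contOn H1 H3 H5).mono (by rw [uIcc_of_le hr]; exact fun x hx => hx.1)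
    have hint8 : IntervalIntegrable (fun s : ℝ => 8 * s ^ 3) volume 0 r := by
      apply ContinuousOn.intervalIntegrable
      fun_prop
    have hmono : ∫ s in (0:ℝ)..r, s ^ 3 * rlap 4 u s ≤ ∫ s in (0:ℝ)..r, 8 * s ^ 3 := by
      apply intervalIntegral.integral_mono_on hr hint hint8
      intro x hx
      have h8 := q_le8 H1 H2 H3 H5 hx.1
      nlinarith [pow_nonneg hx.1 3]
    have hval : ∫ s in (0:ℝ)..r, 8 * s ^ 3 = 2 * r ^ 4 := by
      rw [intervalIntegral.integral_const_mul, integral_pow]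
      norm_num
      ring
    have hs2 := star2 H1 H3 H5 hr
    have : r ^ 3 * p u r ≤ 2 * r ^ 4 := by rw [hs2]; rw [hval] at hmono; exact hmono
    have hr3 : 0 < r ^ 3 := by positivity
    nlinarith

lemma u_FTC (H1 : ContDiffOn ℝ 4 u (Ici 0)) {r : ℝ} (hr : 0 ≤ r) :
    u r = u 0 + ∫ s in (0:ℝ)..r, p u s := by
  have hint : IntervalIntegrable (p u) volume 0 r :=
    ContinuousOn.intervalIntegrable
      ((hp H1).continuousOn.mono (by rw [uIcc_of_le hr]; exact fun x hx => hx.1))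
  have hcont : ContinuousOn u (Icc 0 r) := H1.continuousOn.mono (fun x hx => hx.1)
  have hder : ∀ x ∈ Ioo (0:ℝ) r, HasDerivWithinAt u (p u x) (Ioi x) x := by
    intro x hx
    have hd : DifferentiableAt ℝ u x :=
      (H1.contDiffAt (Ici_mem_nhds hx.1)).differentiableAt (by norm_num)
    have := hd.hasDerivAt
    rw [show deriv u x = p u x from (deriv_u_eq H1 hx.1)] at this
    exact this.hasDerivWithinAt
  have := integral_eq_sub_of_hasDeriv_right_of_le hr hcont hder hint
  linarith

lemma u_upper (H1 : ContDiffOn ℝ 4 u (Ici 0))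
    (H2 : ∀ r : ℝ, 0 < r → (rlap 4)^[2] u r = -Real.exp (u r))
    (H3 : p u 0 = 0) (H5 : rlap 4 u 0 = 8) {b r : ℝ} (H6 : u 0 = -b) (hr : 0 ≤ r) :
    u r ≤ -b + r ^ 2 := by
  rw [u_FTC H1 hr, H6]
  have hint : IntervalIntegrable (p u) volume 0 r :=
    ContinuousOn.intervalIntegrable
      ((hp H1).continuousOn.mono (by rw [uIcc_of_le hr]; exact fun x hx => hx.1))
  have hint2 : IntervalIntegrable (fun s : ℝ => 2 * s) volume 0 r := by
    apply ContinuousOn.intervalIntegrable; fun_prop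
  have hmono : ∫ s in (0:ℝ)..r, p u s ≤ ∫ s in (0:ℝ)..r, 2 * s :=
    intervalIntegral.integral_mono_on hr hint hint2
      (fun x hx => p_le H1 H2 H3 H5 hx.1)
  have hval : ∫ s in (0:ℝ)..r, 2 * s = r ^ 2 := by
    rw [intervalIntegral.integral_const_mul, integral_id]
    ring
  linarith

lemma m_continuousOn (H1 : ContDiffOn ℝ 4 u (Ici 0))
    (H2 : ∀ r : ℝ, 0 < r → (rlap 4)^[2] u r = -Real.exp (u r)) :
    ContinuousOn (m u) (Ici 0) := by
  have : ContinuousOn (fun r => -(G u r)) (Ici 0) := (G_contOn H1).neg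
  exact this.congr (fun x hx => by beta_reduce; rw [star1 H1 H2 hx, neg_neg])

lemma exists_qneg (H1 : ContDiffOn ℝ 4 u (Ici 0))
    (H2 : ∀ r : ℝ, 0 < r → (rlap 4)^[2] u r = -Real.exp (u r))
    (H3 : p u 0 = 0) (H5 : rlap 4 u 0 = 8) {b : ℝ} (H6 : u 0 = -b) :
    ∃ R : ℝ, 0 < R ∧ rlap 4 u R < 0 := by
  by_contra hcon
  push_neg at hcon
  -- q nonneg everywhere on [0,∞)
  have hq0 : ∀ s : ℝ, 0 ≤ s → 0 ≤ rlap 4 u s := by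
    intro s hs
    rcases eq_or_lt_of_le hs with h | h
    · rw [← h, H5]; norm_num
    · exact hcon s h
  -- p nonneg
  have hpnn : ∀ r : ℝ, 0 ≤ r → 0 ≤ p u r := by
    intro r hr
    rcases eq_or_lt_of_le hr with h | h
    · rw [← h, H3]
    · have hs2 := star2 H1 H3 H5 hr
      have hnn : 0 ≤ ∫ s in (0:ℝ)..r, s ^ 3 * rlap 4 u s :=
        intervalIntegral.integral_nonneg hr
          (fun x hx => mul_nonneg (pow_nonneg hx.1 3) (hq0 x hx.1))
      nlinarith [pow_pos h 3]
  -- u ≥ -b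
  have hub : ∀ r : ℝ, 0 ≤ r → -b ≤ u r := by
    intro r hr
    rw [u_FTC H1 hr, H6]
    have : 0 ≤ ∫ s in (0:ℝ)..r, p u s :=
      intervalIntegral.integral_nonneg hr (fun x hx => hpnn x hx.1)
    linarith
  -- m lower bound
  have hml : ∀ t : ℝ, 0 ≤ t → Real.exp (-b) * t ^ 4 / 4 ≤ m u t := by
    intro t ht
    have hint : IntervalIntegrable (fun s => s ^ 3 * Real.exp (u s)) volume 0 t := by
      apply ContinuousOn.intervalIntegrable
      apply ContinuousOn.mul (continuousOn_pow 3)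
      exact Real.continuous_exp.comp_continuousOn
        (H1.continuousOn.mono (by rw [uIcc_of_le ht]; exact fun x hx => hx.1))
    have hintc : IntervalIntegrable (fun s : ℝ => s ^ 3 * Real.exp (-b)) volume 0 t := by
      apply ContinuousOn.intervalIntegrable; fun_prop
    have hmono : ∫ s in (0:ℝ)..t, s ^ 3 * Real.exp (-b) ≤ ∫ s in (0:ℝ)..t, s ^ 3 * Real.exp (u s) := by
      apply intervalIntegral.integral_mono_on ht hintc hint
      intro x hx
      have := hub x hx.1
      have := Real.exp_le_exp.mpr this
      nlinarith [pow_nonneg hx.1 3]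
    have hval : ∫ s in (0:ℝ)..t, s ^ 3 * Real.exp (-b) = Real.exp (-b) * t ^ 4 / 4 := by
      rw [intervalIntegral.integral_mul_const, integral_pow]
      norm_num
      ring
    rw [m]
    linarith
  -- FTC for q on [1, R]
  set R := Real.sqrt (1 + 73 * Real.exp b) with hRdef
  have hR1 : 1 ≤ R := by
    rw [hRdef]
    nlinarith [Real.sq_sqrt (by positivity : (0:ℝ) ≤ 1 + 73 * Real.exp b),
      Real.sqrt_nonneg (1 + 73 * Real.exp b), Real.exp_pos b]
  have hRsq : R ^ 2 = 1 + 73 * Real.exp b := by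
    rw [hRdef, Real.sq_sqrt]
    nlinarith [Real.exp_pos b]
  have hq_int : IntervalIntegrable (fun t => -(m u t) / t ^ 3) volume 1 R := by
    apply ContinuousOn.intervalIntegrable
    apply ContinuousOn.div
    · exact ((m_continuousOn H1 H2).mono
        (by rw [uIcc_of_le hR1]; exact fun x hx => le_trans zero_le_one hx.1)).neg
    · fun_prop
    · intro x hx
      rw [uIcc_of_le hR1] at hx
      have : (0:ℝ) < x := lt_of_lt_of_le zero_lt_one hx.1
      positivity
  have hftc : ∫ t in (1:ℝ)..R, -(m u t) / t ^ 3 = rlap 4 u R - rlap 4 u 1 := by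
    apply intervalIntegral.integral_eq_sub_of_hasDerivAt
    · intro x hx
      rw [uIcc_of_le hR1] at hx
      exact hasDerivAt_q_val H1 H2 (lt_of_lt_of_le zero_lt_one hx.1)
    · exact hq_int
  -- lower bound of the integral of m/t^3
  have hintc2 : IntervalIntegrable (fun t : ℝ => -(Real.exp (-b) * t / 4)) volume 1 R := by
    apply ContinuousOn.intervalIntegrable; fun_prop
  have hmono2 : ∫ t in (1:ℝ)..R, -(m u t) / t ^ 3 ≤ ∫ t in (1:ℝ)..R, -(Real.exp (-b) * t / 4) := by
    apply intervalIntegral.integral_mono_on hR1 hq_int hintc2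
    intro x hx
    have hx0 : (0:ℝ) < x := lt_of_lt_of_le zero_lt_one hx.1
    have hm := hml x hx0.le
    rw [div_le_iff₀ (by positivity : (0:ℝ) < x ^ 3)]
    have hx4 : Real.exp (-b) * x ^ 4 / 4 = (Real.exp (-b) * x / 4) * x ^ 3 := by ring
    nlinarith [hm]
  have hval2 : ∫ t in (1:ℝ)..R, -(Real.exp (-b) * t / 4) = -(Real.exp (-b) / 8 * (R ^ 2 - 1)) := by
    have : ∫ t in (1:ℝ)..R, -(Real.exp (-b) * t / 4)
        = ∫ t in (1:ℝ)..R, (-(Real.exp (-b)) / 4) * t := by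
      congr 1; funext t; ring
    rw [this, intervalIntegral.integral_const_mul, integral_id]
    ring
  have hbig : Real.exp (-b) / 8 * (R ^ 2 - 1) = 73 / 8 := by
    rw [hRsq]
    rw [show (1:ℝ) + 73 * Real.exp b - 1 = 73 * Real.exp b by ring]
    rw [Real.exp_neg]
    field_simp
  have hq1 : rlap 4 u 1 ≤ 8 := q_le8 H1 H2 H3 H5 zero_le_one
  have hqR : 0 ≤ rlap 4 u R := hq0 R (lt_of_lt_of_le zero_lt_one hR1).le
  rw [hftc] at hmono2
  rw [hval2, hbig] at hmono2
  linarith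

lemma integrable_f (H1 : ContDiffOn ℝ 4 u (Ici 0))
    (H2 : ∀ r : ℝ, 0 < r → (rlap 4)^[2] u r = -Real.exp (u r))
    (H3 : p u 0 = 0) (H5 : rlap 4 u 0 = 8) {b : ℝ} (H6 : u 0 = -b) :
    IntegrableOn (fun r => Real.exp (u r) * r ^ 3) (Ioi (0:ℝ)) volume := by
  obtain ⟨R, hR0, hRneg⟩ := exists_qneg H1 H2 H3 H5 H6
  set δ := -(rlap 4 u R) with hδdef
  have hδ : 0 < δ := by rw [hδdef]; linarith
  have hqle : ∀ s : ℝ, R ≤ s → rlap 4 u s ≤ -δ := by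
    intro s hs
    have := q_antitone H1 H2 H3 H5 (le_of_lt hR0) (le_trans hR0.le hs) hs
    rw [hδdef]; linarith
  -- upper bound for r^3 * p r when r ≥ R
  have hq_int : ∀ a c : ℝ, 0 ≤ a → IntervalIntegrable (fun s => s ^ 3 * rlap 4 u s) volume a c → True := fun _ _ _ _ => trivial
  have hqint : ∀ a c : ℝ, 0 ≤ a → a ≤ c →
      IntervalIntegrable (fun s => s ^ 3 * rlap 4 u s) volume a c := by
    intro a c ha hac
    apply ContinuousOn.intervalIntegrable
    apply ContinuousOn.mul (continuousOn_pow 3)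
    apply (q_contOn H1 H3 H5).mono
    rw [uIcc_of_le hac]
    exact fun x hx => le_trans ha hx.1
  set C0 := ∫ s in (0:ℝ)..R, s ^ 3 * rlap 4 u s with hC0
  set K := C0 + δ * R ^ 4 / 4 with hK
  have hpupper : ∀ r : ℝ, R ≤ r → r ^ 3 * p u r ≤ K - δ / 4 * r ^ 4 := by
    intro r hr
    have h0r : (0:ℝ) ≤ r := le_trans hR0.le hr
    have hsplit : (∫ s in (0:ℝ)..R, s ^ 3 * rlap 4 u s)
        + (∫ s in R..r, s ^ 3 * rlap 4 u s) = ∫ s in (0:ℝ)..r, s ^ 3 * rlap 4 u s :=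
      intervalIntegral.integral_add_adjacent_intervals
        (hqint 0 R le_rfl hR0.le) (hqint R r hR0.le hr)
    have hmono : ∫ s in R..r, s ^ 3 * rlap 4 u s ≤ ∫ s in R..r, -δ * s ^ 3 := by
      apply intervalIntegral.integral_mono_on hr (hqint R r hR0.le hr)
        (by apply ContinuousOn.intervalIntegrable; fun_prop)
      intro x hx
      have hx0 : (0:ℝ) ≤ x := le_trans hR0.le hx.1
      have := hqle x hx.1
      nlinarith [pow_nonneg hx0 3]
    have hval : ∫ s in R..r, -δ * s ^ 3 = -δ * (r ^ 4 - R ^ 4) / 4 := by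
      rw [intervalIntegral.integral_const_mul, integral_pow]
      norm_num
      ring
    have hs2 := star2 H1 H3 H5 h0r
    rw [hs2, ← hsplit]
    rw [hval] at hmono
    rw [hK]
    linarith
  -- choose R1
  have htend : Tendsto (fun r : ℝ => δ / 8 * r ^ 4) atTop atTop :=
    (tendsto_pow_atTop (by norm_num : (4:ℕ) ≠ 0)).const_mul_atTop (by positivity)
  obtain ⟨R1, hR1⟩ := eventually_atTop.mp
    ((htend.eventually_ge_atTop K).and (eventually_ge_atTop (max R 1)))
  have hR1R : R ≤ R1 := le_trans (le_max_left _ _) (hR1 R1 le_rfl).2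
  have hR1one : (1:ℝ) ≤ R1 := le_trans (le_max_right _ _) (hR1 R1 le_rfl).2
  have hR1pos : (0:ℝ) < R1 := lt_of_lt_of_le zero_lt_one hR1one
  -- p is ≤ -(δ/8) r for r ≥ R1
  have hpneg : ∀ r : ℝ, R1 ≤ r → p u r ≤ -(δ / 8) * r := by
    intro r hr
    have hrR : R ≤ r := le_trans hR1R hr
    have hrpos : (0:ℝ) < r := lt_of_lt_of_le hR1pos hr
    have h1 := hpupper r hrR
    have h2 : K ≤ δ / 8 * r ^ 4 := (hR1 r hr).1
    have h3 : r ^ 3 * p u r ≤ -(δ / 8) * r ^ 4 := by linarith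
    nlinarith [pow_pos hrpos 3]
  -- u decays quadratically for r ≥ R1
  set c := δ / 16 with hc
  set A := u R1 + c * R1 ^ 2 with hA
  have hudecay : ∀ r : ℝ, R1 ≤ r → u r ≤ A - c * r ^ 2 := by
    intro r hr
    have hrpos : (0:ℝ) < r := lt_of_lt_of_le hR1pos hr
    have hfr := u_FTC H1 hrpos.le
    have hfR1 := u_FTC H1 hR1pos.le
    have hpint : ∀ a d : ℝ, 0 ≤ a → a ≤ d → IntervalIntegrable (p u) volume a d := by
      intro a d ha had
      apply ContinuousOn.intervalIntegrable
      apply (hp H1).continuousOn.mono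
      rw [uIcc_of_le had]
      exact fun x hx => le_trans ha hx.1
    have hsplit : (∫ s in (0:ℝ)..R1, p u s) + (∫ s in R1..r, p u s)
        = ∫ s in (0:ℝ)..r, p u s :=
      intervalIntegral.integral_add_adjacent_intervals
        (hpint 0 R1 le_rfl hR1pos.le) (hpint R1 r hR1pos.le hr)
    have hmono : ∫ s in R1..r, p u s ≤ ∫ s in R1..r, -(δ / 8) * s := by
      apply intervalIntegral.integral_mono_on hr (hpint R1 r hR1pos.le hr)
        (by apply ContinuousOn.intervalIntegrable; fun_prop)
      exact fun x hx => hpneg x hx.1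
    have hval : ∫ s in R1..r, -(δ / 8) * s = -(δ / 16) * (r ^ 2 - R1 ^ 2) := by
      rw [intervalIntegral.integral_const_mul, integral_id]
      ring
    rw [hval] at hmono
    have : u r = u R1 + ∫ s in R1..r, p u s := by
      rw [hfr, hfR1, ← hsplit]; ring
    rw [this, hA, hc]
    linarith
  -- integrability
  have hsplitset : Ioc (0:ℝ) R1 ∪ Ioi R1 = Ioi (0:ℝ) := Ioc_union_Ioi_eq_Ioi hR1pos.le
  rw [← hsplitset]
  apply IntegrableOn.union
  · -- on Ioc 0 R1
    apply IntegrableOn.mono_set (t := Icc (0:ℝ) R1) _ Ioc_subset_Icc_self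
    apply ContinuousOn.integrableOn_compact isCompact_Icc
    apply ContinuousOn.mul
    · exact Real.continuous_exp.comp_continuousOn
        (H1.continuousOn.mono (fun x hx => hx.1))
    · fun_prop
  · -- on Ioi R1
    have hgint : IntegrableOn (fun x : ℝ => Real.exp A * (x ^ 3 * Real.exp (-c * x ^ 2)))
        (Ioi R1) volume := by
      have h0 : IntegrableOn (fun x : ℝ => x ^ (3:ℝ) * Real.exp (-c * x ^ 2)) (Ioi 0) volume :=
        integrableOn_rpow_mul_exp_neg_mul_sq (by positivity) (by norm_num)
      have h1 : IntegrableOn (fun x : ℝ => x ^ 3 * Real.exp (-c * x ^ 2)) (Ioi 0) volume := by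
        apply h0.congr_fun _ measurableSet_Ioi
        intro x hx
        show x ^ (3:ℝ) * Real.exp (-c * x ^ 2) = x ^ (3:ℕ) * Real.exp (-c * x ^ 2)
        rw [show (3:ℝ) = ((3:ℕ):ℝ) by norm_num, Real.rpow_natCast]
      exact ((h1.mono_set (Ioi_subset_Ioi hR1pos.le)).const_mul (Real.exp A))
    apply Integrable.mono' hgint
    · exact (ContinuousOn.mul
        (Real.continuous_exp.comp_continuousOn
          (H1.continuousOn.mono (fun x (hx : x ∈ Ioi R1) => le_of_lt (lt_of_le_of_lt hR1pos.le hx))))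
        (continuousOn_pow 3)).aestronglyMeasurable measurableSet_Ioi
    · rw [ae_restrict_iff' measurableSet_Ioi]
      apply Filter.Eventually.of_forall
      intro x hx
      have hx1 : R1 ≤ x := le_of_lt hx
      have hx0 : (0:ℝ) < x := lt_of_lt_of_le hR1pos hx1
      have hu := hudecay x hx1
      rw [Real.norm_eq_abs, abs_of_nonneg (by positivity)]
      have hexp : Real.exp (u x) ≤ Real.exp A * Real.exp (-c * x ^ 2) := by
        rw [← Real.exp_add]
        apply Real.exp_le_exp.mpr
        linarith
      calc Real.exp (u x) * x ^ 3 ≤ (Real.exp A * Real.exp (-c * x ^ 2)) * x ^ 3 := by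
            apply mul_le_mul_of_nonneg_right hexp (by positivity)
        _ = Real.exp A * (x ^ 3 * Real.exp (-c * x ^ 2)) := by ring

lemma mass_lb (H1 : ContDiffOn ℝ 4 u (Ici 0))
    (H2 : ∀ r : ℝ, 0 < r → (rlap 4)^[2] u r = -Real.exp (u r))
    (H3 : p u 0 = 0) (H5 : rlap 4 u 0 = 8) {b : ℝ} (H6 : u 0 = -b) (hb : 0 < b) :
    b ≤ ∫ r in Ioi (0:ℝ), Real.exp (u r) * r ^ 3 := by
  set M := ∫ r in Ioi (0:ℝ), Real.exp (u r) * r ^ 3 with hM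
  have hint := integrable_f H1 H2 H3 H5 H6
  have hM0 : 0 ≤ M := by
    apply setIntegral_nonneg measurableSet_Ioi
    intro x hx
    exact mul_nonneg (Real.exp_pos _).le (pow_nonneg (le_of_lt hx) 3)
  -- m is bounded by M
  have hmM : ∀ t : ℝ, 0 < t → m u t ≤ M := by
    intro t ht
    rw [m, intervalIntegral.integral_of_le ht.le]
    have h1 : ∫ s in Ioc (0:ℝ) t, s ^ 3 * Real.exp (u s)
        = ∫ s in Ioc (0:ℝ) t, Real.exp (u s) * s ^ 3 := by
      simp_rw [mul_comm]
    rw [h1]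
    apply setIntegral_mono_set hint
    · rw [Filter.EventuallyLE, ae_restrict_iff' measurableSet_Ioi]
      exact Filter.Eventually.of_forall
        (fun x hx => mul_nonneg (Real.exp_pos _).le (pow_nonneg (le_of_lt hx) 3))
    · exact (Ioc_subset_Ioi_self).eventuallyLE
  clear_value M
  -- the kernel k
  set k : ℝ → ℝ := fun t => m u t / t ^ 3 with hk
  have hkint : ∀ a d : ℝ, 0 < a → a ≤ d → IntervalIntegrable k volume a d := by
    intro a d ha had
    apply ContinuousOn.intervalIntegrable
    apply ContinuousOn.div
    · apply (m_continuousOn H1 H2).mono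
      rw [uIcc_of_le had]
      exact fun x hx => le_trans ha.le hx.1
    · fun_prop
    · intro x hx
      rw [uIcc_of_le had] at hx
      have : (0:ℝ) < x := lt_of_lt_of_le ha hx.1
      positivity
  have hk' : ∀ t : ℝ, k t = m u t / t ^ 3 := fun t => by rw [hk]
  clear_value k
  obtain ⟨R, hR0, hRneg⟩ := exists_qneg H1 H2 H3 H5 H6
  set T := Real.sqrt b with hT
  have hT0 : 0 < T := Real.sqrt_pos.mpr hb
  have hT2 : T ^ 2 = b := Real.sq_sqrt hb.le
  -- pick a small ε
  have hev : ∀ᶠ ε in nhdsWithin 0 (Ioi (0:ℝ)), 7 < rlap 4 u ε :=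
    (q_tendsto8 H1 H3 H5).eventually (eventually_gt_nhds (by norm_num : (7:ℝ) < 8))
  have hev2 : ∀ᶠ ε in nhdsWithin 0 (Ioi (0:ℝ)), ε ∈ Ioo (0:ℝ) (min T R) :=
    Ioo_mem_nhdsGT (lt_min hT0 hR0)
  obtain ⟨ε, hε7, hεIoo⟩ := (hev.and hev2).exists
  have hε0 : 0 < ε := hεIoo.1
  have hεT : ε < T := lt_of_lt_of_le hεIoo.2 (min_le_left _ _)
  have hεR : ε < R := lt_of_lt_of_le hεIoo.2 (min_le_right _ _)
  set J := max R T with hJ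
  have hRJ : R ≤ J := le_max_left _ _
  have hTJ : T ≤ J := le_max_right _ _
  have hεJ : ε ≤ J := le_trans hεR.le hRJ
  -- FTC for q on [ε, R]
  have hqftc : ∫ t in ε..R, -(m u t) / t ^ 3 = rlap 4 u R - rlap 4 u ε := by
    apply intervalIntegral.integral_eq_sub_of_hasDerivAt
    · intro x hx
      rw [uIcc_of_le hεR.le] at hx
      exact hasDerivAt_q_val H1 H2 (lt_of_lt_of_le hε0 hx.1)
    · have := (hkint ε R hε0 hεR.le).neg
      apply IntervalIntegrable.congr_ae this
      apply Filter.EventuallyEq.of_eq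
      funext t
      show -(k t) = -m u t / t ^ 3
      rw [hk' t, neg_div]
  have h7 : 7 < ∫ t in ε..R, k t := by
    have hneg : ∫ t in ε..R, -(m u t) / t ^ 3 = -∫ t in ε..R, k t := by
      rw [← intervalIntegral.integral_neg]
      congr 1
      funext t
      rw [hk' t, neg_div]
    rw [hneg] at hqftc
    have : ∫ t in ε..R, k t = rlap 4 u ε - rlap 4 u R := by linarith
    rw [this]
    linarith
  -- extend to [ε, J]
  have hle1 : ∫ t in ε..R, k t ≤ ∫ t in ε..J, k t := by
    apply intervalIntegral.integral_mono_interval le_rfl hεR.le hRJ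
    · rw [Filter.EventuallyLE, ae_restrict_iff' measurableSet_Ioc]
      apply Filter.Eventually.of_forall
      intro x hx
      have hx0 : 0 < x := lt_of_le_of_lt hε0.le hx.1
      rw [hk' x]
      have := m_nonneg (u := u) hx0.le
      positivity
    · exact hkint ε J hε0 hεJ
  -- split at T
  have hsplit : (∫ t in ε..T, k t) + (∫ t in T..J, k t) = ∫ t in ε..J, k t :=
    intervalIntegral.integral_add_adjacent_intervals
      (hkint ε T hε0 hεT.le) (hkint T J hT0 hTJ)
  -- bound the first piece
  have hF1 : ∀ t : ℝ, HasDerivAt (fun y => Real.exp (y ^ 2 - b) / 8)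
      (Real.exp (t ^ 2 - b) * (2 * t) / 8) t := by
    intro t
    have := (((hasDerivAt_pow 2 t).sub_const b).exp).div_const 8
    refine this.congr_deriv ?_
    push_cast
    ring
  have hbound1 : ∫ t in ε..T, k t ≤ ∫ t in ε..T, Real.exp (t ^ 2 - b) * (2 * t) / 8 := by
    apply intervalIntegral.integral_mono_on hεT.le (hkint ε T hε0 hεT.le)
      (by apply ContinuousOn.intervalIntegrable; fun_prop)
    intro x hx
    have hx0 : 0 < x := lt_of_lt_of_le hε0 hx.1
    -- m u x ≤ exp (x^2 - b) * x^4 / 4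
    have hmle : m u x ≤ Real.exp (x ^ 2 - b) * (x ^ 4 / 4) := by
      have hint1 : IntervalIntegrable (fun s => s ^ 3 * Real.exp (u s)) volume 0 x := by
        apply ContinuousOn.intervalIntegrable
        apply ContinuousOn.mul (continuousOn_pow 3)
        exact Real.continuous_exp.comp_continuousOn
          (H1.continuousOn.mono (by rw [uIcc_of_le hx0.le]; exact fun y hy => hy.1))
      have hint2 : IntervalIntegrable (fun s : ℝ => s ^ 3 * Real.exp (x ^ 2 - b)) volume 0 x := by
        apply ContinuousOn.intervalIntegrable; fun_prop
      have hmono : ∫ s in (0:ℝ)..x, s ^ 3 * Real.exp (u s)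
          ≤ ∫ s in (0:ℝ)..x, s ^ 3 * Real.exp (x ^ 2 - b) := by
        apply intervalIntegral.integral_mono_on hx0.le hint1 hint2
        intro s hs
        have hus : u s ≤ -b + s ^ 2 := u_upper H1 H2 H3 H5 H6 hs.1
        have hsx : s ^ 2 ≤ x ^ 2 := by nlinarith [hs.1, hs.2]
        have : u s ≤ x ^ 2 - b := by linarith
        have hexp : Real.exp (u s) ≤ Real.exp (x ^ 2 - b) := Real.exp_le_exp.mpr this
        nlinarith [pow_nonneg hs.1 3]
      have hval : ∫ s in (0:ℝ)..x, s ^ 3 * Real.exp (x ^ 2 - b)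
          = Real.exp (x ^ 2 - b) * (x ^ 4 / 4) := by
        rw [intervalIntegral.integral_mul_const, integral_pow]
        norm_num
        ring
      rw [hval] at hmono
      rw [m]
      exact hmono
    rw [hk' x]
    rw [div_le_iff₀ (by positivity : (0:ℝ) < x ^ 3)]
    nlinarith [hmle]
  have hval1 : ∫ t in ε..T, Real.exp (t ^ 2 - b) * (2 * t) / 8
      = Real.exp (T ^ 2 - b) / 8 - Real.exp (ε ^ 2 - b) / 8 := by
    apply intervalIntegral.integral_eq_sub_of_hasDerivAt (fun t _ => hF1 t)
    apply ContinuousOn.intervalIntegrable; fun_prop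
  have hpiece1 : ∫ t in ε..T, k t ≤ 1 / 8 := by
    rw [hval1] at hbound1
    rw [hT2, sub_self, Real.exp_zero] at hbound1
    have := Real.exp_pos (ε ^ 2 - b)
    linarith
  -- bound the second piece
  have hbound2 : ∫ t in T..J, k t ≤ ∫ t in T..J, M / t ^ 3 := by
    apply intervalIntegral.integral_mono_on hTJ (hkint T J hT0 hTJ)
    · apply ContinuousOn.intervalIntegrable
      apply ContinuousOn.div continuousOn_const (by fun_prop)
      intro x hx
      rw [uIcc_of_le hTJ] at hx
      have : (0:ℝ) < x := lt_of_lt_of_le hT0 hx.1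
      positivity
    · intro x hx
      have hx0 : 0 < x := lt_of_lt_of_le hT0 hx.1
      rw [hk' x]
      exact div_le_div_of_nonneg_right (hmM x hx0) (pow_pos hx0 3).le
  have hF2 : ∀ t : ℝ, 0 < t → HasDerivAt (fun y => -(M / 2) * (y ^ 2)⁻¹) (M / t ^ 3) t := by
    intro t ht
    have := ((hasDerivAt_pow 2 t).inv (by positivity)).const_mul (-(M / 2))
    refine this.congr_deriv ?_
    push_cast
    field_simp
  have hval2 : ∫ t in T..J, M / t ^ 3
      = -(M / 2) * (J ^ 2)⁻¹ - (-(M / 2) * (T ^ 2)⁻¹) := by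
    have := intervalIntegral.integral_eq_sub_of_hasDerivAt (a := T) (b := J)
      (f := fun y => -(M / 2) * (y ^ 2)⁻¹) (f' := fun t => M / t ^ 3)
      (fun x hx => by rw [uIcc_of_le hTJ] at hx; exact hF2 x (lt_of_lt_of_le hT0 hx.1)) ?_
    · simpa using this
    · apply ContinuousOn.intervalIntegrable
      apply ContinuousOn.div continuousOn_const (by fun_prop)
      intro x hx
      rw [uIcc_of_le hTJ] at hx
      have : (0:ℝ) < x := lt_of_lt_of_le hT0 hx.1
      positivity
  have hpiece2 : ∫ t in T..J, k t ≤ M / (2 * b) := by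
    rw [hval2] at hbound2
    have hJ2 : (0:ℝ) < J ^ 2 := by positivity
    have h1 : -(M / 2) * (J ^ 2)⁻¹ ≤ 0 := by
      apply mul_nonpos_of_nonpos_of_nonneg
      · linarith
      · positivity
    have h2 : (M / 2) * (T ^ 2)⁻¹ = M / (2 * b) := by
      rw [hT2]
      field_simp
    nlinarith [hbound2]
  -- conclude
  have hfinal : 7 < 1 / 8 + M / (2 * b) := by
    have := hle1
    rw [← hsplit] at this
    linarith
  have : 55 / 8 < M / (2 * b) := by linarith
  have hM2b : 55 / 8 * (2 * b) < M := by
    rw [lt_div_iff₀ (by positivity : (0:ℝ) < 2 * b)] at this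
    linarith
  nlinarith

end Bih

/-- For `b > 0`, let `u_b ∈ C^4([0,∞))` be the radial solution in dimension
`4` of `Δ_4² u = -e^u` on `(0,∞)` with `u'(0) = 0`, `(Δ_4 u)'(0) = 0`, `(Δ_4 u)(0) = 8`
and `u(0) = -b`. Then `ω_3 ∫_0^∞ e^{u_b(r)} r³ dr → +∞` as `b → +∞`. -/
theorem biharmonic_volume_tendsto_atTop
    (U : ℝ → ℝ → ℝ)
    (hU : ∀ b : ℝ, 0 < b →
      ContDiffOn ℝ 4 (U b) (Set.Ici 0) ∧
      (∀ r : ℝ, 0 < r → (rlap 4)^[2] (U b) r = -Real.exp (U b r)) ∧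
      derivWithin (U b) (Set.Ici 0) 0 = 0 ∧
      derivWithin (rlap 4 (U b)) (Set.Ici 0) 0 = 0 ∧
      rlap 4 (U b) 0 = 8 ∧ U b 0 = -b) :
    Tendsto (fun b : ℝ => sphereVol 4 * ∫ r in Set.Ioi (0:ℝ), Real.exp (U b r) * r^3)
      atTop atTop := by
  have hkey : ∀ b : ℝ, 0 < b → b ≤ ∫ r in Set.Ioi (0:ℝ), Real.exp (U b r) * r^3 := by
    intro b hb
    obtain ⟨h1, h2, h3, h4, h5, h6⟩ := hU b hb
    exact Bih.mass_lb h1 h2 h3 h5 h6 hb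
  have hc : 0 < sphereVol 4 := by
    rw [sphereVol]
    have h1 : (0:ENNReal) < volume (Metric.ball (0 : EuclideanSpace ℝ (Fin 4)) 1) :=
      Metric.measure_ball_pos _ _ one_pos
    have h2 : volume (Metric.ball (0 : EuclideanSpace ℝ (Fin 4)) 1) < ⊤ :=
      MeasureTheory.measure_ball_lt_top
    have h3 := ENNReal.toReal_pos h1.ne' h2.ne
    positivity
  have hmono : Tendsto (fun b : ℝ => sphereVol 4 * b) atTop atTop :=
    Tendsto.const_mul_atTop hc tendsto_id
  apply tendsto_atTop_mono' atTop ?_ hmono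
  filter_upwards [eventually_gt_atTop (0:ℝ)] with b hb
  exact mul_le_mul_of_nonneg_left (hkey b hb) hc.le
end

section
/- Let m ≥ 2 be an integer and let u ∈ C^{2m}([0,∞)) be a radial solution of Δ_{2m}^m u = −e^u on (0,∞) with (Δ_{2m}^i u)'(0) = 0 for all 0 ≤ i ≤ m−1, such that V := ω_{2m−1} ∫_0^∞ e^{u(r)} r^{2m−1} dr < ∞ and lim_{r→∞} (Δ_{2m}^{m−1} u)(r) < 0 (the limit, which always exists since Δ_{2m}^{m−1}u is decreasing, may be −∞). Then for every r₀ > 0 one has V > (2m−2)·ω_{2m−1}·r₀^{2m−2}·(Δ_{2m}^{m−1} u)(r₀). -/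
open MeasureTheory Filter Set
open scoped ENNReal

open intervalIntegral

section Helpers

lemma rlap_pos (N : ℕ) (v : ℝ → ℝ) {r : ℝ} (hr : 0 < r) :
    rlap N v r = deriv (deriv v) r + ((N : ℝ) - 1) / r * deriv v r := by
  simp [rlap, hr.ne']

lemma contDiffOn_rlap {N : ℕ} {v : ℝ → ℝ} {k : ℕ} (h : ContDiffOn ℝ (k+2 : ℕ) v (Ioi 0)) :
    ContDiffOn ℝ (k : ℕ) (rlap N v) (Ioi 0) := by
  have h1 : ContDiffOn ℝ (k+1 : ℕ) (deriv v) (Ioi 0) := by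
    apply h.deriv_of_isOpen isOpen_Ioi
    norm_cast
  have h2 : ContDiffOn ℝ (k : ℕ) (deriv (deriv v)) (Ioi 0) := by
    apply h1.deriv_of_isOpen isOpen_Ioi
    norm_cast
  have h3 : ContDiffOn ℝ (k : ℕ) (fun r => ((N : ℝ) - 1) / r * deriv v r) (Ioi 0) := by
    apply ContDiffOn.mul _ (h1.of_le (by exact_mod_cast Nat.le_succ k))
    exact contDiffOn_const.div contDiffOn_id (fun x hx => ne_of_gt hx)
  exact (h2.add h3).congr fun r hr => rlap_pos N v hr

lemma aux_deriv {v : ℝ → ℝ} (h : ContDiffOn ℝ (2:ℕ) v (Ioi 0)) :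
    (∀ r : ℝ, 0 < r → HasDerivAt v (deriv v r) r) ∧
    (∀ r : ℝ, 0 < r → HasDerivAt (deriv v) (deriv (deriv v) r) r) ∧
    ContinuousOn (deriv v) (Ioi 0) ∧ ContinuousOn v (Ioi 0) := by
  have h1 : ContDiffOn ℝ (1:ℕ) (deriv v) (Ioi 0) :=
    h.deriv_of_isOpen isOpen_Ioi (by norm_cast)
  refine ⟨fun r hr => ?_, fun r hr => ?_, h1.continuousOn, h.continuousOn⟩
  · exact ((h.differentiableOn (by norm_num)).differentiableAt
      (isOpen_Ioi.mem_nhds hr)).hasDerivAt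
  · exact ((h1.differentiableOn (by norm_cast)).differentiableAt
      (isOpen_Ioi.mem_nhds hr)).hasDerivAt

lemma gderiv {N : ℕ} (hN : 2 ≤ N) {v : ℝ → ℝ}
    (hdd : ∀ r : ℝ, 0 < r → HasDerivAt (deriv v) (deriv (deriv v) r) r)
    {r : ℝ} (hr : 0 < r) :
    HasDerivAt (fun t => t^(N-1) * deriv v t) (r^(N-1) * rlap N v r) r := by
  have h := (hasDerivAt_pow (N-1) r).mul (hdd r hr)
  refine h.congr_deriv ?_; symm
  rw [rlap_pos N v hr]
  have hN1 : ((N - 1 : ℕ) : ℝ) = (N : ℝ) - 1 := by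
    push_cast [Nat.cast_sub (by omega : 1 ≤ N)]; ring
  have hpow : r^(N-1) = r^(N-1-1) * r := by
    rw [← pow_succ]; congr 1; omega
  rw [hN1, hpow]
  field_simp
  ring

lemma ftc_eq {v v' : ℝ → ℝ} {a b : ℝ} (ha : 0 < a) (hab : a ≤ b)
    (hv : ∀ r ∈ Icc a b, HasDerivAt v (v' r) r) (hc : ContinuousOn v' (Ioi 0)) :
    ∫ s in a..b, v' s = v b - v a := by
  apply intervalIntegral.integral_eq_sub_of_hasDerivAt
  · rwa [Set.uIcc_of_le hab]
  · apply ContinuousOn.intervalIntegrable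
    apply hc.mono
    rw [Set.uIcc_of_le hab]
    exact fun x hx => lt_of_lt_of_le ha hx.1

lemma ii_int {f : ℝ → ℝ} {a b : ℝ} (ha : 0 < a) (hab : a ≤ b)
    (hf : ContinuousOn f (Ioi 0)) : IntervalIntegrable f volume a b := by
  apply ContinuousOn.intervalIntegrable
  apply hf.mono
  rw [Set.uIcc_of_le hab]
  exact fun x hx => lt_of_lt_of_le ha hx.1

lemma int_mono {f g : ℝ → ℝ} {a b : ℝ} (ha : 0 < a) (hab : a ≤ b)
    (hf : ContinuousOn f (Ioi 0)) (hg : ContinuousOn g (Ioi 0))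
    (hle : ∀ s ∈ Icc a b, f s ≤ g s) :
    ∫ s in a..b, f s ≤ ∫ s in a..b, g s :=
  intervalIntegral.integral_mono_on hab (ii_int ha hab hf) (ii_int ha hab hg) hle

lemma cont_inv_pow (c : ℝ) (δ : ℕ) : ContinuousOn (fun s : ℝ => c / s^δ) (Ioi 0) := by
  apply ContinuousOn.div continuousOn_const (continuousOn_pow δ)
  exact fun x hx => pow_ne_zero δ (ne_of_gt hx)

lemma int_inv_pow {δ : ℕ} (hδ : 2 ≤ δ) {a b : ℝ} (ha : 0 < a) (hab : a ≤ b) :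
    ∫ s in a..b, 1/s^δ = (1/a^(δ-1) - 1/b^(δ-1))/((δ:ℝ)-1) := by
  have hb : 0 < b := lt_of_lt_of_le ha hab
  have h0 : (0:ℝ) ∉ Set.uIcc a b := by
    rw [Set.uIcc_of_le hab]; rintro ⟨h1, -⟩; linarith
  have h := integral_zpow (a := a) (b := b) (n := -(δ:ℤ))
    (Or.inr ⟨by omega, h0⟩)
  have e : ∀ x : ℝ, (x:ℝ)^(-(δ:ℤ)) = 1/x^δ := by
    intro x; rw [zpow_neg, zpow_natCast, one_div]
  simp only [e] at h
  rw [h]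
  have hδ1 : ((δ:ℝ) - 1) ≠ 0 := by
    have : (2:ℝ) ≤ (δ:ℝ) := by exact_mod_cast hδ
    linarith
  have hcast : ((-(δ:ℤ) : ℤ) : ℝ) + 1 = 1 - (δ:ℝ) := by push_cast; ring
  have ebz : (b:ℝ)^(-(δ:ℤ)+1) = 1/b^(δ-1) := by
    rw [show (-(δ:ℤ)+1) = -((δ:ℤ)-1) by ring, zpow_neg, one_div,
      show ((δ:ℤ)-1) = ((δ-1 : ℕ) : ℤ) by omega, zpow_natCast]
  have eaz : (a:ℝ)^(-(δ:ℤ)+1) = 1/a^(δ-1) := by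
    rw [show (-(δ:ℤ)+1) = -((δ:ℤ)-1) by ring, zpow_neg, one_div,
      show ((δ:ℤ)-1) = ((δ-1 : ℕ) : ℤ) by omega, zpow_natCast]
  rw [ebz, eaz, hcast]
  have h2 : (2:ℝ) ≤ (δ:ℝ) := by exact_mod_cast hδ
  have hne : (1:ℝ) - (δ:ℝ) ≠ 0 := by intro hq; linarith
  rw [div_eq_div_iff hne hδ1]
  ring

lemma integrate_main {N : ℕ} (hN : 4 ≤ N) {v : ℝ → ℝ}
    (hv : ∀ r : ℝ, 0 < r → HasDerivAt v (deriv v r) r)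
    (hvc : ContinuousOn (deriv v) (Ioi 0))
    {τ B₂ D r₃ : ℝ} {β : ℕ}
    (hτ : τ = 1 ∨ τ = -1) (hr₃ : 0 < r₃) (hr₃1 : r₃ ≤ 1) (hB₂ : 0 < B₂) (hD : 0 ≤ D)
    (hβ : β + 4 ≤ N)
    (hlow : ∀ a ∈ Ioc (0:ℝ) r₃, B₂ * a^β ≤ τ * (a^(N-1) * deriv v a))
    (hDb : ∀ a ∈ Ioc (0:ℝ) r₃, |a^(N-1) * deriv v a| ≤ D) :
    ∃ σ B C r₄, (σ = (1:ℝ) ∨ σ = -1) ∧ 0 < B ∧ 0 ≤ C ∧ 0 < r₄ ∧ r₄ ≤ r₃ ∧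
      (∀ a ∈ Ioc (0:ℝ) r₄, B / a^(N-2-β) ≤ σ * v a) ∧
      (∀ a ∈ Ioc (0:ℝ) r₄, |v a| ≤ C / a^(N-2)) := by
  set δ : ℕ := N - 1 - β with hδdef
  have hδ3 : 3 ≤ δ := by omega
  have hδ2 : 2 ≤ δ := by omega
  have hα' : δ - 1 = N - 2 - β := by omega
  have hτsq : τ * τ = 1 := by rcases hτ with h | h <;> rw [h] <;> norm_num
  -- pointwise lower bound on τ * deriv v
  have hlow' : ∀ s ∈ Ioc (0:ℝ) r₃, B₂ / s^δ ≤ τ * deriv v s := by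
    intro s hs
    have hs0 : 0 < s := hs.1
    have hpow : s^(N-1) = s^β * s^δ := by rw [← pow_add]; congr 1; omega
    have h1 := hlow s hs
    rw [hpow] at h1
    rw [div_le_iff₀ (pow_pos hs0 δ)]
    have h2 : B₂ * s^β ≤ (τ * deriv v s * s^δ) * s^β := by
      calc B₂ * s^β ≤ τ * (s^β * s^δ * deriv v s) := h1
      _ = (τ * deriv v s * s^δ) * s^β := by ring
    exact le_of_mul_le_mul_right (by linarith) (pow_pos hs0 β)
  -- pointwise two-sided bound on deriv v
  have hD' : ∀ s ∈ Ioc (0:ℝ) r₃, |deriv v s| ≤ D / s^(N-1) := by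
    intro s hs
    have hs0 : 0 < s := hs.1
    rw [le_div_iff₀ (pow_pos hs0 _)]
    calc |deriv v s| * s^(N-1) = |s^(N-1) * deriv v s| := by
          rw [abs_mul, abs_of_pos (pow_pos hs0 _)]; ring
    _ ≤ D := hDb s hs
  have key : ∀ a ∈ Ioc (0:ℝ) r₃,
      B₂/((δ:ℝ)-1) * (1/a^(δ-1)) - B₂/((δ:ℝ)-1) * (1/r₃^(δ-1)) ≤ τ * v r₃ - τ * v a := by
    intro a ha
    have ha0 : 0 < a := ha.1
    have har : a ≤ r₃ := ha.2
    have hftc : ∫ s in a..r₃, deriv v s = v r₃ - v a :=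
      ftc_eq ha0 har (fun r hr => hv r (lt_of_lt_of_le ha0 hr.1)) hvc
    have hm : ∫ s in a..r₃, B₂/s^δ ≤ ∫ s in a..r₃, τ * deriv v s := by
      apply int_mono ha0 har (cont_inv_pow B₂ δ) (continuousOn_const.mul hvc)
      intro s hs
      exact hlow' s ⟨lt_of_lt_of_le ha0 hs.1, hs.2⟩
    rw [intervalIntegral.integral_const_mul, hftc] at hm
    have hval : ∫ s in a..r₃, B₂/s^δ = B₂ * ((1/a^(δ-1) - 1/r₃^(δ-1))/((δ:ℝ)-1)) := by
      have : ∀ s : ℝ, B₂/s^δ = B₂ * (1/s^δ) := fun s => by ring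
      simp_rw [this]
      rw [intervalIntegral.integral_const_mul, int_inv_pow hδ2 ha0 har]
    rw [hval] at hm
    calc B₂/((δ:ℝ)-1) * (1/a^(δ-1)) - B₂/((δ:ℝ)-1) * (1/r₃^(δ-1))
        = B₂ * ((1/a^(δ-1) - 1/r₃^(δ-1))/((δ:ℝ)-1)) := by ring
    _ ≤ τ * (v r₃ - v a) := hm
    _ = τ * v r₃ - τ * v a := by ring
  set B₃ : ℝ := B₂/((δ:ℝ)-1) with hB₃def
  have hδR : (1:ℝ) ≤ (δ:ℝ) - 1 := by
    have : (2:ℝ) ≤ (δ:ℝ) := by exact_mod_cast hδ2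
    linarith
  have hB₃ : 0 < B₃ := div_pos hB₂ (by linarith)
  set C₅ : ℝ := B₃ * (1/r₃^(δ-1)) + τ * v r₃ with hC₅def
  have keylow : ∀ a ∈ Ioc (0:ℝ) r₃, B₃ / a^(δ-1) - C₅ ≤ (-τ) * v a := by
    intro a ha
    have := key a ha
    have h2 : B₃ / a^(δ-1) = B₃ * (1/a^(δ-1)) := by ring
    rw [h2]; simp only [hC₅def]; linarith
  refine ⟨-τ, B₃/2, |v r₃| + D/((N:ℝ)-2), min r₃ (B₃/(2*(|C₅|+1))), ?_, by positivity, ?_, ?_, min_le_left _ _, ?_, ?_⟩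
  · rcases hτ with h | h <;> rw [h] <;> simp
  · have h2 : (0:ℝ) < (N:ℝ)-2 := by
      have : (4:ℝ) ≤ (N:ℝ) := by exact_mod_cast hN
      linarith
    positivity
  · positivity
  · -- lower invariant
    intro a ha
    have ha0 : 0 < a := ha.1
    have har₃ : a ≤ r₃ := le_trans ha.2 (min_le_left _ _)
    have ha1 : a ≤ 1 := le_trans har₃ hr₃1
    have haB : a ≤ B₃/(2*(|C₅|+1)) := le_trans ha.2 (min_le_right _ _)
    have hpa : 0 < a^(δ-1) := pow_pos ha0 _
    have hpow_le : a^(δ-1) ≤ a := by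
      calc a^(δ-1) ≤ a^1 := pow_le_pow_of_le_one (le_of_lt ha0) ha1 (by omega)
      _ = a := pow_one a
    have hC₅a : C₅ * a^(δ-1) ≤ B₃/2 := by
      calc C₅ * a^(δ-1) ≤ |C₅| * a^(δ-1) := by
            apply mul_le_mul_of_nonneg_right (le_abs_self C₅) (le_of_lt hpa)
      _ ≤ |C₅| * (B₃/(2*(|C₅|+1))) := by
            apply mul_le_mul_of_nonneg_left (le_trans hpow_le haB) (abs_nonneg _)
      _ ≤ B₃/2 := by
            rw [mul_div_assoc', div_le_div_iff₀ (by positivity) (by norm_num : (0:ℝ) < 2)]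
            nlinarith [abs_nonneg C₅, hB₃.le]
    have h3 : C₅ ≤ (B₃/2) / a^(δ-1) := by
      rw [le_div_iff₀ hpa]; exact hC₅a
    have h4 := keylow a ⟨ha0, har₃⟩
    rw [← hα']
    have h5 : B₃/2 / a^(δ-1) = B₃ / a^(δ-1) - (B₃/2) / a^(δ-1) := by ring
    linarith
  · -- upper invariant
    intro a ha
    have ha0 : 0 < a := ha.1
    have har₃ : a ≤ r₃ := le_trans ha.2 (min_le_left _ _)
    have ha1 : a ≤ 1 := le_trans har₃ hr₃1
    have hftc : ∫ s in a..r₃, deriv v s = v r₃ - v a :=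
      ftc_eq ha0 har₃ (fun r hr => hv r (lt_of_lt_of_le ha0 hr.1)) hvc
    have hup : ∫ s in a..r₃, deriv v s ≤ ∫ s in a..r₃, D/s^(N-1) := by
      apply int_mono ha0 har₃ hvc (cont_inv_pow D (N-1))
      intro s hs
      exact le_trans (le_abs_self _) (hD' s ⟨lt_of_lt_of_le ha0 hs.1, hs.2⟩)
    have hdown : ∫ s in a..r₃, -(D/s^(N-1)) ≤ ∫ s in a..r₃, deriv v s := by
      apply int_mono ha0 har₃ (cont_inv_pow D (N-1)).neg hvc
      intro s hs
      have := hD' s ⟨lt_of_lt_of_le ha0 hs.1, hs.2⟩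
      have := neg_abs_le (deriv v s)
      simp only [Pi.neg_apply]
      linarith
    have hNδ2 : 2 ≤ N - 1 := by omega
    have hval : ∫ s in a..r₃, D/s^(N-1) = D * ((1/a^(N-1-1) - 1/r₃^(N-1-1))/(((N-1:ℕ):ℝ)-1)) := by
      have : ∀ s : ℝ, D/s^(N-1) = D * (1/s^(N-1)) := fun s => by ring
      simp_rw [this]
      rw [intervalIntegral.integral_const_mul, int_inv_pow hNδ2 ha0 har₃]
    rw [hval, hftc] at hup
    rw [intervalIntegral.integral_neg, hval, hftc] at hdown
    have hcastN : ((N-1:ℕ):ℝ) - 1 = (N:ℝ) - 2 := by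
      have : ((N-1:ℕ):ℝ) = (N:ℝ) - 1 := by
        push_cast [Nat.cast_sub (by omega : 1 ≤ N)]; ring
      rw [this]; ring
    have hN2 : (0:ℝ) < (N:ℝ) - 2 := by
      have : (4:ℝ) ≤ (N:ℝ) := by exact_mod_cast hN
      linarith
    have hNidx : N - 1 - 1 = N - 2 := by omega
    rw [hcastN, hNidx] at hup hdown
    have hpa : 0 < a^(N-2) := pow_pos ha0 _
    have hpr : 0 < r₃^(N-2) := pow_pos hr₃ _
    have hsub : 1/a^(N-2) - 1/r₃^(N-2) ≤ 1/a^(N-2) := by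
      have : (0:ℝ) ≤ 1/r₃^(N-2) := by positivity
      linarith
    have htail : D * ((1/a^(N-2) - 1/r₃^(N-2))/((N:ℝ)-2)) ≤ (D/((N:ℝ)-2)) * (1/a^(N-2)) := by
      calc D * ((1/a^(N-2) - 1/r₃^(N-2))/((N:ℝ)-2)) ≤ D * ((1/a^(N-2))/((N:ℝ)-2)) := by
            apply mul_le_mul_of_nonneg_left _ hD
            rw [div_le_div_iff₀ hN2 hN2]
            nlinarith
      _ = (D/((N:ℝ)-2)) * (1/a^(N-2)) := by ring
    have hone : (1:ℝ) ≤ 1/a^(N-2) := by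
      rw [le_div_iff₀ hpa, one_mul]
      exact pow_le_one₀ ha0.le ha1
    have hT : (0:ℝ) ≤ (D/((N:ℝ)-2)) * (1/a^(N-2)) := by positivity
    have hub : v r₃ - v a ≤ (D/((N:ℝ)-2)) * (1/a^(N-2)) := le_trans hup htail
    have hlb : -((D/((N:ℝ)-2)) * (1/a^(N-2))) ≤ v r₃ - v a := by
      have := neg_le_neg htail
      linarith
    have habs : |v a| ≤ |v r₃| + (D/((N:ℝ)-2)) * (1/a^(N-2)) := by
      rw [abs_le]
      constructor
      · have := neg_abs_le (v r₃); linarith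
      · have := le_abs_self (v r₃); linarith
    have hfin : (|v r₃| + D/((N:ℝ)-2)) / a^(N-2) = |v r₃| * (1/a^(N-2)) + (D/((N:ℝ)-2)) * (1/a^(N-2)) := by
      ring
    rw [hfin]
    have h10 := mul_le_mul_of_nonneg_left hone (abs_nonneg (v r₃))
    rw [mul_one] at h10
    linarith

lemma integrate_final {N : ℕ} (hN : 4 ≤ N) {v : ℝ → ℝ}
    (hv : ∀ r : ℝ, 0 < r → HasDerivAt v (deriv v r) r)
    (hvc : ContinuousOn (deriv v) (Ioi 0))
    {τ B₂ r₃ : ℝ} {β : ℕ}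
    (hr₃ : 0 < r₃) (hr₃1 : r₃ ≤ 1) (hB₂ : 0 < B₂)
    (hβ : β + 2 ≤ N)
    (hlow : ∀ a ∈ Ioc (0:ℝ) r₃, B₂ * a^β ≤ τ * (a^(N-1) * deriv v a)) :
    ∀ M : ℝ, ∃ a ∈ Ioc (0:ℝ) r₃, M ≤ (-τ) * v a := by
  intro M
  -- pointwise bound: τ * deriv v s ≥ B₂ / s for s ∈ (0, r₃]
  have hlow' : ∀ s ∈ Ioc (0:ℝ) r₃, B₂ * (1/s) ≤ τ * deriv v s := by
    intro s hs
    have hs0 : 0 < s := hs.1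
    have hs1 : s ≤ 1 := le_trans hs.2 hr₃1
    have h1 := hlow s hs
    have hpow : s^(N-1) ≤ s^β * s := by
      calc s^(N-1) = s^β * s^(N-1-β) := by rw [← pow_add]; congr 1; omega
      _ ≤ s^β * s := by
          apply mul_le_mul_of_nonneg_left _ (pow_nonneg hs0.le β)
          calc s^(N-1-β) ≤ s^1 := pow_le_pow_of_le_one hs0.le hs1 (by omega)
          _ = s := pow_one s
    have hk : B₂ ≤ s^(N-1-β) * (τ * deriv v s) := by
      have h2 : B₂ * s^β ≤ (s^(N-1-β) * (τ * deriv v s)) * s^β := by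
        calc B₂ * s^β ≤ τ * (s^(N-1) * deriv v s) := h1
        _ = (s^(N-1-β) * (τ * deriv v s)) * s^β := by
            have hsplit : s^(N-1) = s^β * s^(N-1-β) := by
              rw [← pow_add]; congr 1; omega
            rw [hsplit]; ring
      exact le_of_mul_le_mul_right h2 (pow_pos hs0 β)
    have hX : 0 < τ * deriv v s := by
      by_contra hcon
      push_neg at hcon
      nlinarith [pow_pos hs0 (N-1-β)]
    have hss : s^(N-1-β) ≤ s := by
      calc s^(N-1-β) ≤ s^1 := pow_le_pow_of_le_one hs0.le hs1 (by omega)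
      _ = s := pow_one s
    rw [mul_one_div, div_le_iff₀ hs0]
    nlinarith [mul_le_mul_of_nonneg_right hss hX.le]
  -- choose a small enough
  set T : ℝ := (B₂ * Real.log r₃ - τ * v r₃ - M)/B₂ with hT
  refine ⟨min r₃ (Real.exp T), ⟨by positivity, min_le_left _ _⟩, ?_⟩
  set a : ℝ := min r₃ (Real.exp T) with hadef
  have ha0 : (0:ℝ) < a := by positivity
  have har : a ≤ r₃ := min_le_left _ _
  have hloga : Real.log a ≤ T := by
    calc Real.log a ≤ Real.log (Real.exp T) :=
          Real.log_le_log ha0 (min_le_right _ _)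
    _ = T := Real.log_exp T
  have hftc : ∫ s in a..r₃, deriv v s = v r₃ - v a :=
    ftc_eq ha0 har (fun r hr => hv r (lt_of_lt_of_le ha0 hr.1)) hvc
  have hcont1 : ContinuousOn (fun s : ℝ => B₂ * (1/s)) (Ioi 0) := by
    apply continuousOn_const.mul
    exact continuousOn_const.div continuousOn_id (fun x hx => ne_of_gt hx)
  have hm : ∫ s in a..r₃, B₂ * (1/s) ≤ ∫ s in a..r₃, τ * deriv v s := by
    apply int_mono ha0 har hcont1 (continuousOn_const.mul hvc)
    intro s hs
    exact hlow' s ⟨lt_of_lt_of_le ha0 hs.1, hs.2⟩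
  have h0mem : (0:ℝ) ∉ Set.uIcc a r₃ := by
    rw [Set.uIcc_of_le har]
    rintro ⟨h1', -⟩; linarith
  have hval : ∫ s in a..r₃, B₂ * (1/s) = B₂ * (Real.log r₃ - Real.log a) := by
    rw [intervalIntegral.integral_const_mul, integral_one_div h0mem,
      Real.log_div (ne_of_gt hr₃) (ne_of_gt ha0)]
  rw [hval] at hm
  rw [intervalIntegral.integral_const_mul, hftc] at hm
  have hBT : B₂ * T = B₂ * Real.log r₃ - τ * v r₃ - M := by
    rw [hT]; field_simp
  have hBlog : B₂ * Real.log a ≤ B₂ * T := mul_le_mul_of_nonneg_left hloga hB₂.le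
  nlinarith

lemma core {N : ℕ} (hN : 4 ≤ N) {v p : ℝ → ℝ}
    (hv : ∀ r : ℝ, 0 < r → HasDerivAt v (deriv v r) r)
    (hvc : ContinuousOn (deriv v) (Ioi 0))
    (hg : ∀ r : ℝ, 0 < r → HasDerivAt (fun t => t^(N-1) * deriv v t) (r^(N-1) * p r) r)
    (hpc : ContinuousOn p (Ioi 0))
    {σ B C r₁ : ℝ} {α : ℕ}
    (hσ : σ = 1 ∨ σ = -1) (hB : 0 < B) (hC : 0 ≤ C) (hr₁ : 0 < r₁)
    (hα2 : 2 ≤ α) (hαN : α + 2 ≤ N)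
    (hplow : ∀ a ∈ Ioc (0:ℝ) r₁, B / a^α ≤ σ * p a)
    (hpup : ∀ a ∈ Ioc (0:ℝ) r₁, |p a| ≤ C / a^(N-2)) :
    ∃ τ B₂ D r₃ : ℝ, ∃ β : ℕ, (τ = (1:ℝ) ∨ τ = -1) ∧ 0 < r₃ ∧ r₃ ≤ r₁ ∧ r₃ ≤ 1 ∧
      0 < B₂ ∧ 0 ≤ D ∧ (β = 0 ∨ β = N - α) ∧
      (∀ a ∈ Ioc (0:ℝ) r₃, B₂ * a^β ≤ τ * (a^(N-1) * deriv v a)) ∧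
      (∀ a ∈ Ioc (0:ℝ) r₃, |a^(N-1) * deriv v a| ≤ D) := by
  have hσsq : σ * σ = 1 := by rcases hσ with h | h <;> rw [h] <;> norm_num
  set r₂ : ℝ := min r₁ 1 with hr₂def
  have hr₂ : 0 < r₂ := lt_min hr₁ one_pos
  have hr₂r₁ : r₂ ≤ r₁ := min_le_left _ _
  have hr₂1 : r₂ ≤ 1 := min_le_right _ _
  set S : ℝ → ℝ := fun s => s^(N-1) * p s with hSdef
  have hSc : ContinuousOn S (Ioi 0) := (continuous_pow (N-1)).continuousOn.mul hpc
  have hSbound : ∀ s ∈ Ioc (0:ℝ) r₂, |S s| ≤ C * s := by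
    intro s hs
    have hs0 : 0 < s := hs.1
    have h1 : |S s| = s^(N-1) * |p s| := by
      rw [hSdef]; simp only
      rw [abs_mul, abs_of_pos (pow_pos hs0 _)]
    rw [h1]
    calc s^(N-1) * |p s| ≤ s^(N-1) * (C / s^(N-2)) := by
          apply mul_le_mul_of_nonneg_left _ (pow_nonneg hs0.le _)
          exact hpup s ⟨hs0, le_trans hs.2 hr₂r₁⟩
    _ = C * s := by
        rw [show N-1 = (N-2)+1 by omega, pow_succ]
        field_simp
  have hmeas : ∀ t : ℝ, 0 < t → AEStronglyMeasurable S (volume.restrict (Ioc 0 t)) := by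
    intro t ht
    exact (hSc.mono (fun x hx => hx.1)).aestronglyMeasurable measurableSet_Ioc
  have hSint : IntegrableOn S (Ioc 0 r₂) := by
    apply Integrable.mono' (g := fun s => C * s)
    · exact (continuous_const.mul continuous_id).integrableOn_Ioc
    · exact hmeas r₂ hr₂
    · rw [ae_restrict_iff' measurableSet_Ioc]
      exact ae_of_all _ fun s hs => by rw [Real.norm_eq_abs]; exact hSbound s hs
  set J : ℝ := ∫ s in Ioc (0:ℝ) r₂, S s with hJdef
  set d : ℝ := r₂^(N-1) * deriv v r₂ - J with hddef
  have hrep : ∀ a ∈ Ioc (0:ℝ) r₂, a^(N-1) * deriv v a = d + ∫ s in Ioc (0:ℝ) a, S s := by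
    intro a ha
    have ha0 : 0 < a := ha.1
    have har : a ≤ r₂ := ha.2
    have hftc : ∫ s in a..r₂, S s = r₂^(N-1) * deriv v r₂ - a^(N-1) * deriv v a := by
      have := intervalIntegral.integral_eq_sub_of_hasDerivAt
        (f := fun t => t^(N-1) * deriv v t) (f' := S) (a := a) (b := r₂)
        (by rw [Set.uIcc_of_le har]
            exact fun x hx => hg x (lt_of_lt_of_le ha0 hx.1))
        (ii_int ha0 har hSc)
      simpa using this
    have hsplit : J = (∫ s in Ioc (0:ℝ) a, S s) + ∫ s in Ioc a r₂, S s := by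
      rw [hJdef, ← Set.Ioc_union_Ioc_eq_Ioc ha0.le har]
      apply setIntegral_union (Set.Ioc_disjoint_Ioc_of_le le_rfl) measurableSet_Ioc
      · exact hSint.mono_set (fun x hx => ⟨hx.1, le_trans hx.2 har⟩)
      · exact hSint.mono_set (fun x hx => ⟨lt_trans ha0 hx.1, hx.2⟩)
    have hio : ∫ s in Ioc a r₂, S s = ∫ s in a..r₂, S s := by
      rw [intervalIntegral.integral_of_le har]
    rw [hddef, hsplit, hio, hftc]
    ring
  have htail_abs : ∀ a ∈ Ioc (0:ℝ) r₂, |∫ s in Ioc (0:ℝ) a, S s| ≤ C * a := by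
    intro a ha
    have ha0 : 0 < a := ha.1
    have ha1 : a ≤ 1 := le_trans ha.2 hr₂1
    have hSint' : IntegrableOn S (Ioc 0 a) :=
      hSint.mono_set (fun x hx => ⟨hx.1, le_trans hx.2 ha.2⟩)
    calc |∫ s in Ioc (0:ℝ) a, S s| = ‖∫ s in Ioc (0:ℝ) a, S s‖ := (Real.norm_eq_abs _).symm
    _ ≤ ∫ s in Ioc (0:ℝ) a, ‖S s‖ := norm_integral_le_integral_norm _
    _ = ∫ s in Ioc (0:ℝ) a, |S s| := by simp [Real.norm_eq_abs]
    _ ≤ ∫ s in Ioc (0:ℝ) a, C * s := by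
        apply setIntegral_mono_on hSint'.abs
          ((continuous_const.mul continuous_id).integrableOn_Ioc) measurableSet_Ioc
        exact fun s hs => hSbound s ⟨hs.1, le_trans hs.2 ha.2⟩
    _ = C * (a^2/2) := by
        rw [← intervalIntegral.integral_of_le ha0.le, intervalIntegral.integral_const_mul,
          integral_id]
        ring
    _ ≤ C * a := by
        apply mul_le_mul_of_nonneg_left _ hC
        nlinarith
  have hNα : (0:ℝ) < (N:ℝ) - (α:ℝ) := by
    have h1 : (α:ℝ) + 2 ≤ (N:ℝ) := by exact_mod_cast hαN
    linarith
  have htail_low : ∀ a ∈ Ioc (0:ℝ) r₂,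
      B/((N:ℝ)-(α:ℝ)) * a^(N-α) ≤ σ * ∫ s in Ioc (0:ℝ) a, S s := by
    intro a ha
    have ha0 : 0 < a := ha.1
    have hSint' : IntegrableOn S (Ioc 0 a) :=
      hSint.mono_set (fun x hx => ⟨hx.1, le_trans hx.2 ha.2⟩)
    have h1 : σ * ∫ s in Ioc (0:ℝ) a, S s = ∫ s in Ioc (0:ℝ) a, σ * S s :=
      (MeasureTheory.integral_const_mul σ _).symm
    rw [h1]
    have h2 : ∫ s in Ioc (0:ℝ) a, B * s^(N-1-α) ≤ ∫ s in Ioc (0:ℝ) a, σ * S s := by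
      apply setIntegral_mono_on
        ((continuous_const.mul (continuous_pow _)).integrableOn_Ioc)
        (hSint'.const_mul σ) measurableSet_Ioc
      intro s hs
      have hs0 : 0 < s := hs.1
      have h3 := hplow s ⟨hs0, le_trans hs.2 (le_trans ha.2 hr₂r₁)⟩
      have h4 : σ * S s = s^(N-1) * (σ * p s) := by rw [hSdef]; simp only; ring
      rw [h4]
      calc B * s^(N-1-α) = s^(N-1) * (B / s^α) := by
            rw [show N-1 = α + (N-1-α) by omega, pow_add]
            field_simp
            ring
            congr 1; omega
      _ ≤ s^(N-1) * (σ * p s) := by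
            apply mul_le_mul_of_nonneg_left h3 (pow_nonneg hs0.le _)
    refine le_trans (le_of_eq ?_) h2
    rw [← intervalIntegral.integral_of_le ha0.le, intervalIntegral.integral_const_mul,
      integral_pow]
    have hc1 : ((N-1-α : ℕ):ℝ) + 1 = (N:ℝ) - (α:ℝ) := by
      have : ((N-1-α : ℕ):ℝ) = (N:ℝ) - 1 - (α:ℝ) := by
        push_cast [Nat.cast_sub (by omega : α ≤ N-1), Nat.cast_sub (by omega : 1 ≤ N)]
        ring
      rw [this]; ring
    have hc2 : N-1-α+1 = N-α := by omega
    rw [hc1, hc2]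
    have h0 : (0:ℝ)^(N-α) = 0 := zero_pow (by omega)
    rw [h0]
    field_simp
    rw [sub_zero]
  have hgb : ∀ a ∈ Ioc (0:ℝ) r₂, |a^(N-1) * deriv v a| ≤ |d| + C := by
    intro a ha
    rw [hrep a ha]
    have h1 := htail_abs a ha
    have ha1 : a ≤ 1 := le_trans ha.2 hr₂1
    have h2 : C * a ≤ C := by nlinarith [ha.1, hC]
    calc |d + ∫ s in Ioc (0:ℝ) a, S s| ≤ |d| + |∫ s in Ioc (0:ℝ) a, S s| := abs_add_le _ _
    _ ≤ |d| + C := by linarith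
  have hDpos : (0:ℝ) ≤ |d| + C := by positivity
  rcases lt_trichotomy d 0 with hd | hd | hd
  · -- d < 0 : τ = -1, β = 0
    have hmd : 0 < -d := by linarith
    have hq : 0 < (-d)/(2*(C+1)) := div_pos hmd (by linarith)
    refine ⟨-1, -d/2, |d| + C, min r₂ ((-d)/(2*(C+1))), 0, Or.inr rfl,
      lt_min hr₂ hq, le_trans (min_le_left _ _) hr₂r₁, le_trans (min_le_left _ _) hr₂1,
      by linarith, hDpos, Or.inl rfl, ?_, ?_⟩
    · intro a ha
      have ham : a ∈ Ioc (0:ℝ) r₂ := ⟨ha.1, le_trans ha.2 (min_le_left _ _)⟩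
      have h1 := htail_abs a ham
      have h2 : a ≤ (-d)/(2*(C+1)) := le_trans ha.2 (min_le_right _ _)
      have h3 : C * a ≤ -d/2 := by
        calc C * a ≤ C * ((-d)/(2*(C+1))) := mul_le_mul_of_nonneg_left h2 hC
        _ ≤ -d/2 := by
            rw [mul_div_assoc', div_le_div_iff₀ (by linarith) (by norm_num : (0:ℝ) < 2)]
            nlinarith
      rw [pow_zero, mul_one, hrep a ham]
      have h4 : ∫ s in Ioc (0:ℝ) a, S s ≤ C * a := le_trans (le_abs_self _) h1
      linarith
    · intro a ha
      exact hgb a ⟨ha.1, le_trans ha.2 (min_le_left _ _)⟩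
  · -- d = 0 : τ = σ, β = N - α
    refine ⟨σ, B/((N:ℝ)-(α:ℝ)), |d| + C, r₂, N-α, hσ, hr₂, hr₂r₁, hr₂1,
      div_pos hB hNα, hDpos, Or.inr rfl, ?_, fun a ha => hgb a ha⟩
    intro a ha
    have h1 := htail_low a ha
    rw [hrep a ha, hd, zero_add]
    exact h1
  · -- d > 0 : τ = 1, β = 0
    have hq : 0 < d/(2*(C+1)) := div_pos hd (by linarith)
    refine ⟨1, d/2, |d| + C, min r₂ (d/(2*(C+1))), 0, Or.inl rfl,
      lt_min hr₂ hq, le_trans (min_le_left _ _) hr₂r₁, le_trans (min_le_left _ _) hr₂1,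
      by linarith, hDpos, Or.inl rfl, ?_, ?_⟩
    · intro a ha
      have ham : a ∈ Ioc (0:ℝ) r₂ := ⟨ha.1, le_trans ha.2 (min_le_left _ _)⟩
      have h1 := htail_abs a ham
      have h2 : a ≤ d/(2*(C+1)) := le_trans ha.2 (min_le_right _ _)
      have h3 : C * a ≤ d/2 := by
        calc C * a ≤ C * (d/(2*(C+1))) := mul_le_mul_of_nonneg_left h2 hC
        _ ≤ d/2 := by
            rw [mul_div_assoc', div_le_div_iff₀ (by linarith) (by norm_num : (0:ℝ) < 2)]
            nlinarith
      rw [pow_zero, mul_one, hrep a ham]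
      have h4 : -(C * a) ≤ ∫ s in Ioc (0:ℝ) a, S s := by
        have := neg_abs_le (∫ s in Ioc (0:ℝ) a, S s)
        linarith
      linarith
    · intro a ha
      exact hgb a ⟨ha.1, le_trans ha.2 (min_le_left _ _)⟩


section
variable {N : ℕ} {v p : ℝ → ℝ}

theorem descent_step (hN : 4 ≤ N)
    (hv : ∀ r : ℝ, 0 < r → HasDerivAt v (deriv v r) r)
    (hvc : ContinuousOn (deriv v) (Ioi 0))
    (hg : ∀ r : ℝ, 0 < r → HasDerivAt (fun t => t^(N-1) * deriv v t) (r^(N-1) * p r) r)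
    (hpc : ContinuousOn p (Ioi 0))
    {σ B C r₁ : ℝ} {α : ℕ}
    (hσ : σ = 1 ∨ σ = -1) (hB : 0 < B) (hC : 0 ≤ C) (hr₁ : 0 < r₁)
    (hα4 : 4 ≤ α) (hαN : α + 2 ≤ N)
    (hplow : ∀ a ∈ Ioc (0:ℝ) r₁, B / a^α ≤ σ * p a)
    (hpup : ∀ a ∈ Ioc (0:ℝ) r₁, |p a| ≤ C / a^(N-2)) :
    ∃ σ' B' C' r₄ : ℝ, ∃ α' : ℕ, (σ' = (1:ℝ) ∨ σ' = -1) ∧ 0 < B' ∧ 0 ≤ C' ∧ 0 < r₄ ∧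
      r₄ ≤ 1 ∧ (α' = N - 2 ∨ α' = α - 2) ∧
      (∀ a ∈ Ioc (0:ℝ) r₄, B' / a^α' ≤ σ' * v a) ∧
      (∀ a ∈ Ioc (0:ℝ) r₄, |v a| ≤ C' / a^(N-2)) := by
  obtain ⟨τ, B₂, D, r₃, β, hτ, hr₃, hr₃r₁, hr₃1, hB₂, hD, hβcase, hlow, hDb⟩ :=
    core hN hv hvc hg hpc hσ hB hC hr₁ (by omega) hαN hplow hpup
  have hβ4 : β + 4 ≤ N := by rcases hβcase with h | h <;> omega
  obtain ⟨σ', B', C', r₄, hσ', hB', hC', hr₄, hr₄r₃, hlow', hup'⟩ :=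
    integrate_main hN hv hvc hτ hr₃ hr₃1 hB₂ hD hβ4 hlow hDb
  refine ⟨σ', B', C', r₄, N-2-β, hσ', hB', hC', hr₄, le_trans hr₄r₃ hr₃1, ?_, hlow', hup'⟩
  rcases hβcase with h | h
  · left; omega
  · right; omega

theorem descent_fin (hN : 4 ≤ N)
    (hv : ∀ r : ℝ, 0 < r → HasDerivAt v (deriv v r) r)
    (hvc : ContinuousOn (deriv v) (Ioi 0))
    (hg : ∀ r : ℝ, 0 < r → HasDerivAt (fun t => t^(N-1) * deriv v t) (r^(N-1) * p r) r)
    (hpc : ContinuousOn p (Ioi 0))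
    {σ B C r₁ : ℝ} {α : ℕ}
    (hσ : σ = 1 ∨ σ = -1) (hB : 0 < B) (hC : 0 ≤ C) (hr₁ : 0 < r₁)
    (hα2 : 2 ≤ α) (hαN : α + 2 ≤ N)
    (hplow : ∀ a ∈ Ioc (0:ℝ) r₁, B / a^α ≤ σ * p a)
    (hpup : ∀ a ∈ Ioc (0:ℝ) r₁, |p a| ≤ C / a^(N-2)) :
    ∀ M : ℝ, ∃ a, a ∈ Ioc (0:ℝ) 1 ∧ M ≤ |v a| := by
  obtain ⟨τ, B₂, D, r₃, β, hτ, hr₃, hr₃r₁, hr₃1, hB₂, hD, hβcase, hlow, hDb⟩ :=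
    core hN hv hvc hg hpc hσ hB hC hr₁ hα2 hαN hplow hpup
  have hβ2 : β + 2 ≤ N := by rcases hβcase with h | h <;> omega
  intro M
  obtain ⟨a, ha, hM⟩ := integrate_final hN hv hvc hr₃ hr₃1 hB₂ hβ2 hlow M
  refine ⟨a, ⟨ha.1, le_trans ha.2 hr₃1⟩, ?_⟩
  calc M ≤ (-τ) * v a := hM
  _ ≤ |(-τ) * v a| := le_abs_self _
  _ = |v a| := by rcases hτ with h | h <;> rw [h] <;> simp

end

end Helpers

theorem volume_lower_bound_via_penultimate_laplacian
    (m : ℕ) (hm : 2 ≤ m) (u : ℝ → ℝ)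
    (hu : ContDiffOn ℝ (2*m : ℕ) u (Set.Ici 0))
    (heq : ∀ r : ℝ, 0 < r → (rlap (2*m))^[m] u r = -Real.exp (u r))
    (hder : ∀ i < m, derivWithin ((rlap (2*m))^[i] u) (Set.Ici 0) 0 = 0)
    (hint : IntegrableOn (fun r => Real.exp (u r) * r^(2*m-1)) (Set.Ioi 0))
    (hlim : ∃ L : EReal,
      Tendsto (fun r => (((rlap (2*m))^[m-1] u r : ℝ) : EReal)) atTop (nhds L) ∧ L < 0) :
    ∀ r₀ : ℝ, 0 < r₀ →
      (2*(m:ℝ) - 2) * sphereVol (2*m) * r₀^(2*m-2) * ((rlap (2*m))^[m-1] u r₀)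
        < sphereVol (2*m) * ∫ r in Set.Ioi (0:ℝ), Real.exp (u r) * r^(2*m-1) := by
  intro r₀ hr₀
  set N : ℕ := 2*m with hNdef
  have hN4 : 4 ≤ N := by omega
  have hN2 : 2 ≤ N := by omega
  -- regularity of the iterates on `Ioi 0`
  have hreg : ∀ i : ℕ, i ≤ m → ContDiffOn ℝ ((2*(m-i) : ℕ)) ((rlap N)^[i] u) (Ioi 0) := by
    intro i
    induction i with
    | zero =>
      intro _
      simpa [hNdef] using hu.mono (fun x (hx : x ∈ Ioi (0:ℝ)) => Set.mem_Ici.mpr (le_of_lt (Set.mem_Ioi.mp hx)))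
    | succ i ih =>
      intro hi
      have h2 := ih (by omega)
      rw [show 2*(m-i) = 2*(m-(i+1)) + 2 by omega] at h2
      rw [Function.iterate_succ_apply']
      exact contDiffOn_rlap h2
  have hC2 : ∀ i : ℕ, i ≤ m - 1 → ContDiffOn ℝ (2:ℕ) ((rlap N)^[i] u) (Ioi 0) := by
    intro i hi
    apply (hreg i (by omega)).of_le
    have h1 : (2:ℕ) ≤ 2*(m-i) := by omega
    exact_mod_cast h1
  have hfacts : ∀ i : ℕ, i ≤ m-1 →
      (∀ r:ℝ, 0 < r → HasDerivAt ((rlap N)^[i] u) (deriv ((rlap N)^[i] u) r) r) ∧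
      (∀ r:ℝ, 0 < r → HasDerivAt (deriv ((rlap N)^[i] u)) (deriv (deriv ((rlap N)^[i] u)) r) r) ∧
      ContinuousOn (deriv ((rlap N)^[i] u)) (Ioi 0) ∧
      ContinuousOn ((rlap N)^[i] u) (Ioi 0) :=
    fun i hi => aux_deriv (hC2 i hi)
  have hgd : ∀ i : ℕ, i ≤ m-1 → ∀ r : ℝ, 0 < r →
      HasDerivAt (fun t => t^(N-1) * deriv ((rlap N)^[i] u) t)
        (r^(N-1) * ((rlap N)^[i+1] u r)) r := by
    intro i hi r hr
    have h := gderiv hN2 ((hfacts i hi).2.1) hr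
    simpa [Function.iterate_succ_apply'] using h
  have hUc : ContinuousOn u (Ici 0) := hu.continuousOn
  have hEc : ContinuousOn (fun r : ℝ => Real.exp (u r) * r^(N-1)) (Ioi 0) :=
    (Real.continuous_exp.comp_continuousOn (hUc.mono (fun x (hx : x ∈ Ioi (0:ℝ)) => Set.mem_Ici.mpr (le_of_lt (Set.mem_Ioi.mp hx))))).mul
      (continuous_pow _).continuousOn
  have hint' : IntegrableOn (fun r : ℝ => Real.exp (u r) * r^(N-1)) (Ioi 0) := hint
  set I : ℝ := ∫ r in Ioi (0:ℝ), Real.exp (u r) * r^(N-1) with hIdef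
  have hEnn : ∀ s : ℝ, s ∈ Ioi (0:ℝ) → 0 ≤ Real.exp (u s) * s^(N-1) := by
    intro s hs
    have : (0:ℝ) < s := hs
    positivity
  have hI0 : 0 ≤ I := setIntegral_nonneg measurableSet_Ioi hEnn
  have hFle : ∀ a b : ℝ, 0 < a → ∫ s in Ioc a b, Real.exp (u s) * s^(N-1) ≤ I := by
    intro a b ha0
    apply setIntegral_mono_set hint'
    · rw [EventuallyLE, ae_restrict_iff' measurableSet_Ioi]
      exact ae_of_all _ hEnn
    · exact HasSubset.Subset.eventuallyLE (fun x hx => lt_trans ha0 hx.1)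
  have hw1 := hfacts (m-1) (le_refl _)
  -- the derivative of `r^(N-1) * w'` at the top level is `-(e^u r^(N-1))`
  have hgm : ∀ r : ℝ, 0 < r → HasDerivAt (fun t => t^(N-1) * deriv ((rlap N)^[m-1] u) t)
      (-(Real.exp (u r) * r^(N-1))) r := by
    intro r hr
    have h := hgd (m-1) (le_refl _) r hr
    rw [show (m-1)+1 = m by omega] at h
    have h2 : r^(N-1) * ((rlap N)^[m] u r) = -(Real.exp (u r) * r^(N-1)) := by
      rw [heq r hr]; ring
    rwa [h2] at h
  -- KEY inequality: `r^(N-1) (Δ^(m-1)u)'(r) ≥ -I` for all `r > 0`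
  have KEY : ∀ r : ℝ, 0 < r → -I ≤ r^(N-1) * deriv ((rlap N)^[m-1] u) r := by
    by_contra hcon
    push_neg at hcon
    obtain ⟨r₁, hr₁, hlt⟩ := hcon
    have hgval : ∀ a : ℝ, 0 < a → a ≤ r₁ →
        a^(N-1) * deriv ((rlap N)^[m-1] u) a
          = r₁^(N-1) * deriv ((rlap N)^[m-1] u) r₁
            + ∫ s in Ioc a r₁, Real.exp (u s) * s^(N-1) := by
      intro a ha0 har
      have hftc : ∫ s in a..r₁, -(Real.exp (u s) * s^(N-1))
          = r₁^(N-1) * deriv ((rlap N)^[m-1] u) r₁ - a^(N-1) * deriv ((rlap N)^[m-1] u) a := by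
        have := intervalIntegral.integral_eq_sub_of_hasDerivAt
          (f := fun t => t^(N-1) * deriv ((rlap N)^[m-1] u) t)
          (f' := fun s => -(Real.exp (u s) * s^(N-1))) (a := a) (b := r₁)
          (by rw [Set.uIcc_of_le har]
              exact fun x hx => hgm x (lt_of_lt_of_le ha0 hx.1))
          (ii_int ha0 har hEc.neg)
        simpa using this
      have h2 : ∫ s in a..r₁, -(Real.exp (u s) * s^(N-1))
          = -∫ s in Ioc a r₁, Real.exp (u s) * s^(N-1) := by
        rw [intervalIntegral.integral_neg, intervalIntegral.integral_of_le har]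
      rw [h2] at hftc
      linarith
    set g₁ : ℝ := r₁^(N-1) * deriv ((rlap N)^[m-1] u) r₁ with hg₁def
    have hδ : 0 < -(g₁ + I) := by
      have : g₁ < -I := hlt
      linarith
    have hlow : ∀ a ∈ Ioc (0:ℝ) (min r₁ 1),
        -(g₁ + I) * a^0 ≤ (-1) * (a^(N-1) * deriv ((rlap N)^[m-1] u) a) := by
      intro a ha
      have ha0 := ha.1
      have har : a ≤ r₁ := le_trans ha.2 (min_le_left _ _)
      rw [pow_zero, mul_one, hgval a ha0 har]
      have h1 := hFle a r₁ ha0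
      linarith
    have hDb : ∀ a ∈ Ioc (0:ℝ) (min r₁ 1),
        |a^(N-1) * deriv ((rlap N)^[m-1] u) a| ≤ |g₁| + I := by
      intro a ha
      have ha0 := ha.1
      have har : a ≤ r₁ := le_trans ha.2 (min_le_left _ _)
      rw [hgval a ha0 har]
      have h1 := hFle a r₁ ha0
      have h2 : 0 ≤ ∫ s in Ioc a r₁, Real.exp (u s) * s^(N-1) :=
        setIntegral_nonneg measurableSet_Ioc (fun s hs => hEnn s (lt_trans ha0 hs.1))
      rw [abs_le]
      constructor
      · have := neg_abs_le g₁; linarith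
      · have := le_abs_self g₁; linarith
    obtain ⟨σ₀, B₀, C₀, r₅, hσ₀, hB₀, hC₀, hr₅, hr₅le, hlow₀, hup₀⟩ :=
      integrate_main hN4 hw1.1 hw1.2.2.1 (Or.inr rfl) (lt_min hr₁ one_pos) (min_le_right _ _)
        hδ (by positivity) (by omega : 0 + 4 ≤ N) hlow hDb
    rw [show N-2-0 = N-2 by omega] at hlow₀
    -- downward induction on the levels
    have Inv : ∀ k : ℕ, k ≤ m-2 → ∃ σ B C r₄ : ℝ, ∃ α : ℕ,
        (σ = (1:ℝ) ∨ σ = -1) ∧ 0 < B ∧ 0 ≤ C ∧ 0 < r₄ ∧ r₄ ≤ 1 ∧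
        2*(m-1-k) ≤ α ∧ α + 2 ≤ N ∧
        (∀ a ∈ Ioc (0:ℝ) r₄, B / a^α ≤ σ * ((rlap N)^[m-1-k] u a)) ∧
        (∀ a ∈ Ioc (0:ℝ) r₄, |(rlap N)^[m-1-k] u a| ≤ C / a^(N-2)) := by
      intro k
      induction k with
      | zero =>
        intro _
        refine ⟨σ₀, B₀, C₀, r₅, N-2, hσ₀, hB₀, hC₀, hr₅,
          le_trans hr₅le (min_le_right _ _), by omega, by omega, ?_, ?_⟩
        · simpa [Nat.sub_zero] using hlow₀
        · simpa [Nat.sub_zero] using hup₀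
      | succ k ih =>
        intro hk
        obtain ⟨σ', B', C', r₄', α, hσ', hB', hC', hr₄', hr₄1, hα, hαN, hl, hu'⟩ :=
          ih (by omega)
        have hip : m-1-k = (m-1-(k+1))+1 := by omega
        rw [hip] at hl hu' hα
        have him : m-1-(k+1) ≤ m-1 := by omega
        obtain ⟨σ'', B'', C'', r₄'', α'', hσ'', hB'', hC'', hr₄'', hr1'', hαcase, hl'', hu''⟩ :=
          descent_step hN4 ((hfacts _ him).1) ((hfacts _ him).2.2.1) (hgd _ him)
            ((hfacts _ (by omega : (m-1-(k+1))+1 ≤ m-1)).2.2.2)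
            hσ' hB' hC' hr₄' (by omega) hαN hl hu'
        refine ⟨σ'', B'', C'', r₄'', α'', hσ'', hB'', hC'', hr₄'', hr1'', ?_, ?_, hl'', hu''⟩
        · rcases hαcase with h | h <;> omega
        · rcases hαcase with h | h <;> omega
    obtain ⟨σf, Bf, Cf, rf, αf, hσf, hBf, hCf, hrf, hrf1, hαf, hαfN, hlf, huf⟩ :=
      Inv (m-2) (le_refl _)
    rw [show m-1-(m-2) = 1 by omega] at hlf huf hαf
    have hfin := descent_fin hN4 ((hfacts 0 (by omega)).1) ((hfacts 0 (by omega)).2.2.1)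
      (hgd 0 (by omega)) ((hfacts 1 (by omega)).2.2.2)
      hσf hBf hCf hrf (by omega) hαfN hlf huf
    obtain ⟨Mb, hMb⟩ := isCompact_Icc.exists_bound_of_continuousOn
      (hUc.mono (fun x (hx : x ∈ Icc (0:ℝ) 1) => hx.1) : ContinuousOn u (Icc (0:ℝ) 1))
    obtain ⟨a, ha, hMa⟩ := hfin (Mb+1)
    have h1 : |u a| ≤ Mb := by
      have := hMb a ⟨ha.1.le, ha.2⟩
      rwa [Real.norm_eq_abs] at this
    simp only [Function.iterate_zero_apply] at hMa
    linarith
  -- use the limit hypothesis to find a point where `Δ^(m-1)u < 0`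
  obtain ⟨L, hLt, hL0⟩ := hlim
  have hev : ∀ᶠ x in atTop, (((rlap N)^[m-1] u x : ℝ) : EReal) < 0 :=
    hLt.eventually_lt_const hL0
  obtain ⟨rb, hrb, hgt⟩ := (hev.and (eventually_gt_atTop r₀)).exists
  have hwrb : (rlap N)^[m-1] u rb < 0 := by exact_mod_cast hrb
  -- lower bound on the derivative and integration from r₀ to rb
  have hlb : ∀ s ∈ Icc r₀ rb, -(I / s^(N-1)) ≤ deriv ((rlap N)^[m-1] u) s := by
    intro s hs
    have hs0 : 0 < s := lt_of_lt_of_le hr₀ hs.1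
    have h1 := KEY s hs0
    have h2 : (0:ℝ) < s^(N-1) := pow_pos hs0 _
    have h4 : -(I/s^(N-1)) = -I / s^(N-1) := by ring
    rw [h4, div_le_iff₀ h2]
    nlinarith [h1]
  have hmono : ∫ s in r₀..rb, -(I / s^(N-1)) ≤ ∫ s in r₀..rb, deriv ((rlap N)^[m-1] u) s :=
    int_mono hr₀ hgt.le (cont_inv_pow I (N-1)).neg hw1.2.2.1 hlb
  have hftcw : ∫ s in r₀..rb, deriv ((rlap N)^[m-1] u) s
      = (rlap N)^[m-1] u rb - (rlap N)^[m-1] u r₀ :=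
    ftc_eq hr₀ hgt.le (fun r hr => hw1.1 r (lt_of_lt_of_le hr₀ hr.1)) hw1.2.2.1
  have hcastN : ((N-1:ℕ):ℝ) - 1 = (N:ℝ) - 2 := by
    have : ((N-1:ℕ):ℝ) = (N:ℝ) - 1 := by
      push_cast [Nat.cast_sub (by omega : 1 ≤ N)]; ring
    rw [this]; ring
  have hNR : (0:ℝ) < (N:ℝ) - 2 := by
    have : (4:ℝ) ≤ (N:ℝ) := by exact_mod_cast hN4
    linarith
  have hval : ∫ s in r₀..rb, -(I / s^(N-1))
      = -(I * ((1/r₀^(N-2) - 1/rb^(N-2))/((N:ℝ)-2))) := by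
    rw [intervalIntegral.integral_neg]
    congr 1
    have he : ∀ s : ℝ, I / s^(N-1) = I * (1/s^(N-1)) := fun s => by ring
    simp_rw [he]
    rw [intervalIntegral.integral_const_mul, int_inv_pow (by omega : 2 ≤ N-1) hr₀ hgt.le,
      show N-1-1 = N-2 by omega, hcastN]
  rw [hftcw, hval] at hmono
  have hrb2 : (0:ℝ) < 1/rb^(N-2) := by
    have : (0:ℝ) < rb := lt_trans hr₀ hgt
    positivity
  have hr₀2 : (0:ℝ) < r₀^(N-2) := pow_pos hr₀ _
  have hw0lt : (rlap N)^[m-1] u r₀ < I * (1/r₀^(N-2)) / ((N:ℝ)-2) := by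
    have h4 : -(I * ((1/r₀^(N-2) - 1/rb^(N-2))/((N:ℝ)-2))) ≥
        -(I * ((1/r₀^(N-2))/((N:ℝ)-2))) := by
      have h5 : I * ((1/r₀^(N-2) - 1/rb^(N-2))/((N:ℝ)-2)) ≤ I * ((1/r₀^(N-2))/((N:ℝ)-2)) := by
        apply mul_le_mul_of_nonneg_left _ hI0
        rw [div_le_div_iff₀ hNR hNR]
        nlinarith [hrb2]
      linarith
    have h6 : I * (1/r₀^(N-2)) / ((N:ℝ)-2) = I * ((1/r₀^(N-2))/((N:ℝ)-2)) := by ring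
    rw [h6]
    nlinarith [hwrb, hmono, h4]
  have hω : 0 < sphereVol N := by
    unfold sphereVol
    apply mul_pos
    · have : (0:ℕ) < N := by omega
      exact_mod_cast this
    · apply ENNReal.toReal_pos
      · exact (Metric.measure_ball_pos volume _ one_pos).ne'
      · exact (MeasureTheory.measure_ball_lt_top).ne
  have hcoef : (2*(m:ℝ)-2) = (N:ℝ)-2 := by
    rw [hNdef]; push_cast; ring
  have h9 : ((N:ℝ)-2) * r₀^(N-2) * ((rlap N)^[m-1] u r₀) < I := by
    have hK : (0:ℝ) < ((N:ℝ)-2) * r₀^(N-2) := mul_pos hNR hr₀2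
    have h10 : I * (1/r₀^(N-2)) / ((N:ℝ)-2) = I / (((N:ℝ)-2) * r₀^(N-2)) := by
      field_simp
    rw [h10, lt_div_iff₀ hK] at hw0lt
    calc ((N:ℝ)-2) * r₀^(N-2) * ((rlap N)^[m-1] u r₀)
        = ((rlap N)^[m-1] u r₀) * (((N:ℝ)-2) * r₀^(N-2)) := by ring
    _ < I := hw0lt
  calc (2*(m:ℝ) - 2) * sphereVol N * r₀^(N-2) * ((rlap N)^[m-1] u r₀)
      = sphereVol N * (((N:ℝ)-2) * r₀^(N-2) * ((rlap N)^[m-1] u r₀)) := by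
        rw [hcoef]; ring
  _ < sphereVol N * I := mul_lt_mul_of_pos_left h9 hω
end

section
/- Let m ≥ 3 be an integer and c₀ := 4^{m−1}·∏_{k=1}^{m−1} k(m−1+k). For b > 0, let ũ_b ∈ C^{2m}([0,∞)) be the radial solution of Δ_{2m}^m u = −e^u on (0,∞) with (Δ_{2m}^i u)'(0) = 0 for all 0 ≤ i ≤ m−1, u(0) = −b, (Δ_{2m}^k u)(0) = 0 for 1 ≤ k ≤ m−2, and (Δ_{2m}^{m−1} u)(0) = −c₀. Then ũ_b(r) ≤ −r^{2m−2} − b for all r ≥ 0, and consequently lim_{b→+∞} ω_{2m−1} ∫_0^∞ e^{ũ_b(r)} r^{2m−1} dr = 0. -/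
open MeasureTheory Filter Set
open scoped ENNReal
open intervalIntegral Topology

/-- `u` is a global radial solution in dimension `2m` of `Δ_{2m}^m u = -e^u` on `(0,∞)`
with `(Δ_{2m}^i u)'(0) = 0` for `0 ≤ i ≤ m-1`, `u(0) = -b`, `(Δ_{2m}^k u)(0) = 0` for
`1 ≤ k ≤ m-2`, and `(Δ_{2m}^{m-1} u)(0) = c`; regularity `C^{2m}` on `[0,∞)`. -/
def IsSpecialSol (m : ℕ) (c b : ℝ) (u : ℝ → ℝ) : Prop :=
  ContDiffOn ℝ (2*m : ℕ) u (Set.Ici 0) ∧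
  (∀ r : ℝ, 0 < r → (rlap (2*m))^[m] u r = -Real.exp (u r)) ∧
  (∀ i < m, derivWithin ((rlap (2*m))^[i] u) (Set.Ici 0) 0 = 0) ∧
  u 0 = -b ∧
  (∀ k, 1 ≤ k → k ≤ m - 2 → (rlap (2*m))^[k] u 0 = 0) ∧
  (rlap (2*m))^[m-1] u 0 = c


noncomputable def DD (f : ℝ → ℝ) : ℝ → ℝ := derivWithin f (Ici 0)



noncomputable def Ifun (j : ℕ) (G : ℝ → ℝ) : ℝ → ℝ := fun r => ∫ t in (0:ℝ)..1, t ^ j * G (r * t)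

lemma contOn_aux {j : ℕ} {G : ℝ → ℝ} (hG : ContinuousOn G (Ici 0)) {r : ℝ} (hr : 0 ≤ r) :
    ContinuousOn (fun t : ℝ => t ^ j * G (r * t)) (Icc 0 1) := by
  apply ContinuousOn.mul (by fun_prop)
  apply hG.comp (by fun_prop)
  intro t ht
  exact mul_nonneg hr ht.1

lemma Ifun_continuousOn {j : ℕ} {G : ℝ → ℝ} (hG : ContinuousOn G (Ici 0)) :
    ContinuousOn (Ifun j G) (Ici 0) := by
  intro r₀ hr₀
  obtain ⟨M, hM⟩ : ∃ M : ℝ, ∀ s ∈ Icc (0:ℝ) (|r₀| + 1), |G s| ≤ M := by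
    obtain ⟨M, hM⟩ := (isCompact_Icc (a := (0:ℝ)) (b := |r₀| + 1)).exists_bound_of_continuousOn
      (hG.mono (Icc_subset_Ici_self))
    exact ⟨M, fun s hs => hM s hs⟩
  have key : Tendsto (fun r => Ifun j G r) (nhdsWithin r₀ (Ici 0)) (𝓝 (Ifun j G r₀)) := by
    apply intervalIntegral.tendsto_integral_filter_of_dominated_convergence (fun _ => M)
    · filter_upwards [self_mem_nhdsWithin] with r hr
      exact ((contOn_aux hG hr).mono (by rw [uIoc_of_le (zero_le_one)]; exact Ioc_subset_Icc_self)).aestronglyMeasurable measurableSet_uIoc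
    · have hev : ∀ᶠ r in nhdsWithin r₀ (Ici 0), r ∈ Icc 0 (|r₀| + 1) := by
        apply Filter.eventually_inf_principal.mpr ?_
        have : Iio (|r₀| + 1) ∈ 𝓝 r₀ := Iio_mem_nhds (lt_of_le_of_lt (le_abs_self r₀) (by linarith))
        filter_upwards [this] with r h1 h2
        exact ⟨h2, le_of_lt h1⟩
      filter_upwards [hev] with r hr
      refine Eventually.of_forall fun t ht => ?_
      rw [uIoc_of_le (zero_le_one)] at ht
      have ht0 : 0 ≤ t := le_of_lt ht.1
      have h1 : |t ^ j * G (r * t)| ≤ |G (r * t)| := by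
        rw [abs_mul]
        calc |t ^ j| * |G (r*t)| ≤ 1 * |G (r*t)| := by
              apply mul_le_mul_of_nonneg_right _ (abs_nonneg _)
              rw [abs_pow]
              exact pow_le_one₀ (abs_nonneg t) (by rw [abs_of_nonneg ht0]; exact ht.2)
          _ = |G (r*t)| := one_mul _
      refine le_trans h1 (hM _ ⟨mul_nonneg hr.1 ht0, ?_⟩)
      calc r * t ≤ r * 1 := mul_le_mul_of_nonneg_left ht.2 hr.1
        _ = r := mul_one r
        _ ≤ |r₀| + 1 := hr.2
    · exact intervalIntegrable_const
    · refine Eventually.of_forall fun t ht => ?_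
      rw [uIoc_of_le (zero_le_one)] at ht
      have ht0 : 0 < t := ht.1
      apply Tendsto.mul tendsto_const_nhds
      have : Tendsto (fun r => r * t) (nhdsWithin r₀ (Ici 0)) (nhdsWithin (r₀ * t) (Ici 0)) := by
        rw [tendsto_nhdsWithin_iff]
        constructor
        · exact (tendsto_id.mul_const t).mono_left nhdsWithin_le_nhds
        · filter_upwards [self_mem_nhdsWithin] with r hr
          exact mul_nonneg hr ht0.le
      exact (hG (r₀ * t) (mul_nonneg hr₀ ht0.le)).tendsto.comp this
  exact key




lemma DD_hasDerivAt {f : ℝ → ℝ} (hf : DifferentiableOn ℝ f (Ici 0)) {x : ℝ} (hx : 0 < x) :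
    HasDerivAt f (DD f x) x := by
  have h1 : Ici (0:ℝ) ∈ 𝓝 x := Ici_mem_nhds hx
  have h2 := (hf x (le_of_lt hx)).differentiableAt h1
  rw [DD, derivWithin_of_mem_nhds h1]
  exact h2.hasDerivAt

lemma ftc2 {f f' : ℝ → ℝ} {r : ℝ} (hr : 0 ≤ r) (hf : ContinuousOn f (Icc 0 r))
    (hf' : ContinuousOn f' (Icc 0 r))
    (hd : ∀ x ∈ Ioo 0 r, HasDerivAt f (f' x) x) :
    ∫ s in (0:ℝ)..r, f' s = f r - f 0 :=
  integral_eq_sub_of_hasDeriv_right_of_le hr hf (fun x hx => (hd x hx).hasDerivWithinAt)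
    (hf'.intervalIntegrable_of_Icc hr)

lemma Ifun_eq_of_pos {j : ℕ} (G : ℝ → ℝ) {r : ℝ} (hr : 0 < r) :
    Ifun j G r = (∫ s in (0:ℝ)..r, s ^ j * G s) / r ^ (j+1) := by
  have h : ∀ t : ℝ, t ^ j * G (r * t) = (r ^ j)⁻¹ * ((fun s => s ^ j * G s) (r * t)) := by
    intro t
    have : (r * t) ^ j = r ^ j * t ^ j := mul_pow r t j
    field_simp [this]
    ring
  unfold Ifun
  simp_rw [h]
  rw [intervalIntegral.integral_const_mul,
    intervalIntegral.integral_comp_mul_left (fun s => s ^ j * G s) hr.ne']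
  simp only [mul_zero, mul_one, smul_eq_mul]
  rw [eq_div_iff (by positivity), pow_succ]
  have hrj : (r:ℝ)^j ≠ 0 := by positivity
  field_simp

lemma contDiffOn_one_continuousOn {G : ℝ → ℝ} (hG : ContDiffOn ℝ 1 G (Ici 0)) :
    ContinuousOn G (Ici 0) := hG.continuousOn

lemma DD_continuousOn {G : ℝ → ℝ} (hG : ContDiffOn ℝ 1 G (Ici 0)) :
    ContinuousOn (DD G) (Ici 0) :=
  hG.continuousOn_derivWithin (uniqueDiffOn_Ici 0) le_rfl

/-- Integration by parts identity: `r * I_{j+1}(G') r = G r - (j+1) * I_j(G) r` for `r > 0`. -/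
lemma Ifun_parts {j : ℕ} {G : ℝ → ℝ} (hG : ContDiffOn ℝ 1 G (Ici 0)) {r : ℝ} (hr : 0 < r) :
    r * Ifun (j+1) (DD G) r = G r - ((j:ℝ)+1) * Ifun j G r := by
  set φ : ℝ → ℝ := fun t => t ^ (j+1) * G (r * t) with hφ
  set ψ : ℝ → ℝ := fun t => ((j:ℝ)+1) * t ^ j * G (r * t) + t ^ (j+1) * (r * DD G (r * t)) with hψ
  have hGr : ContinuousOn (fun t : ℝ => G (r * t)) (Icc 0 1) := by
    apply hG.continuousOn.comp (by fun_prop)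
    intro t ht; exact mul_nonneg hr.le ht.1
  have hDDr : ContinuousOn (fun t : ℝ => DD G (r * t)) (Icc 0 1) := by
    apply (DD_continuousOn hG).comp (by fun_prop)
    intro t ht; exact mul_nonneg hr.le ht.1
  have hφc : ContinuousOn φ (Icc 0 1) := (by fun_prop : ContinuousOn (fun t:ℝ => t^(j+1)) _).mul hGr
  have hψc : ContinuousOn ψ (Icc 0 1) := by
    apply ContinuousOn.add
    · exact (by fun_prop : ContinuousOn (fun t:ℝ => ((j:ℝ)+1) * t^j) _).mul hGr
    · exact (by fun_prop : ContinuousOn (fun t:ℝ => t^(j+1)) _).mul (hDDr.const_smul r)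
  have hd : ∀ t ∈ Ioo (0:ℝ) 1, HasDerivAt φ (ψ t) t := by
    intro t ht
    have h1 : HasDerivAt (fun t : ℝ => t ^ (j+1)) (((j:ℝ)+1) * t ^ j) t := by
      simpa using hasDerivAt_pow (j+1) t
    have h2 : HasDerivAt (fun t : ℝ => G (r * t)) (r * DD G (r * t)) t := by
      have hrt : 0 < r * t := mul_pos hr ht.1
      have hG' : HasDerivAt G (DD G (r * t)) (r * t) :=
        DD_hasDerivAt (hG.differentiableOn one_ne_zero) hrt
      have hmul : HasDerivAt (fun t : ℝ => r * t) r t := by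
        simpa using (hasDerivAt_id t).const_mul r
      exact (hG'.comp t hmul).congr_deriv (mul_comm _ _)
    exact h1.mul h2
  have key : ∫ t in (0:ℝ)..1, ψ t = φ 1 - φ 0 :=
    ftc2 zero_le_one hφc hψc hd
  have hsplit : ∫ t in (0:ℝ)..1, ψ t
      = ((j:ℝ)+1) * Ifun j G r + r * Ifun (j+1) (DD G) r := by
    rw [hψ]
    rw [intervalIntegral.integral_add]
    · congr 1
      · rw [Ifun, ← intervalIntegral.integral_const_mul]
        congr 1; ext t; ring
      · rw [Ifun, ← intervalIntegral.integral_const_mul]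
        congr 1; ext t; ring
    · exact (((by fun_prop : ContinuousOn (fun t:ℝ => ((j:ℝ)+1) * t^j) _).mul hGr).mono
        (by rw [uIcc_of_le zero_le_one])).intervalIntegrable
    · exact (((by fun_prop : ContinuousOn (fun t:ℝ => t^(j+1)) _).mul (hDDr.const_smul r)).mono
        (by rw [uIcc_of_le zero_le_one])).intervalIntegrable
  have hφ1 : φ 1 = G r := by simp [hφ]
  have hφ0 : φ 0 = 0 := by simp [hφ]
  rw [hsplit, hφ1, hφ0] at key
  linarith

lemma Ifun_hasDerivAt {j : ℕ} {G : ℝ → ℝ} (hG : ContDiffOn ℝ 1 G (Ici 0)) {r : ℝ} (hr : 0 < r) :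
    HasDerivAt (Ifun j G) (Ifun (j+1) (DD G) r) r := by
  set F : ℝ → ℝ := fun x => ∫ s in (0:ℝ)..x, s ^ j * G s with hF
  have hHc : ContinuousOn (fun s : ℝ => s ^ j * G s) (Ici 0) :=
    (by fun_prop : ContinuousOn (fun s:ℝ => s^j) _).mul hG.continuousOn
  have hHcIoi : ContinuousOn (fun s : ℝ => s ^ j * G s) (Ioi 0) := hHc.mono Ioi_subset_Ici_self
  have hFd : HasDerivAt F (r ^ j * G r) r := by
    apply intervalIntegral.integral_hasDerivAt_right
    · exact (hHc.mono (by rw [uIcc_of_le hr.le]; exact Icc_subset_Ici_self)).intervalIntegrable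
    · exact (hHcIoi.stronglyMeasurableAtFilter isOpen_Ioi) r hr
    · exact hHcIoi.continuousAt (Ioi_mem_nhds hr)
  have hpow : HasDerivAt (fun x : ℝ => x ^ (j+1)) (((j:ℝ)+1) * r ^ j) r := by
    simpa using hasDerivAt_pow (j+1) r
  have hdiv : HasDerivAt (fun x => F x / x ^ (j+1))
      ((r ^ j * G r * r ^ (j+1) - F r * (((j:ℝ)+1) * r ^ j)) / (r ^ (j+1)) ^ 2) r :=
    hFd.div hpow (by positivity)
  have heq : Ifun j G =ᶠ[𝓝 r] fun x => F x / x ^ (j+1) := by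
    filter_upwards [Ioi_mem_nhds hr] with x hx
    exact Ifun_eq_of_pos G hx
  have hval : (r ^ j * G r * r ^ (j+1) - F r * (((j:ℝ)+1) * r ^ j)) / (r ^ (j+1)) ^ 2
      = Ifun (j+1) (DD G) r := by
    have hparts := Ifun_parts hG hr (j := j)
    have hIeq : Ifun j G r = F r / r ^ (j+1) := Ifun_eq_of_pos G hr
    have h1 : F r = Ifun j G r * r ^ (j+1) := by
      rw [hIeq]; field_simp
    rw [h1]
    have h2 : Ifun (j+1) (DD G) r = (G r - ((j:ℝ)+1) * Ifun j G r) / r := by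
      rw [← hparts]; field_simp
    rw [h2]
    field_simp
    ring
  exact hval ▸ hdiv.congr_of_eventuallyEq heq

lemma Ifun_hasDerivWithinAt_zero {j : ℕ} {G : ℝ → ℝ} (hG : ContDiffOn ℝ 1 G (Ici 0)) :
    HasDerivWithinAt (Ifun j G) (Ifun (j+1) (DD G) 0) (Ici 0) 0 := by
  obtain ⟨C, hC⟩ : ∃ C : ℝ, ∀ x ∈ Icc (0:ℝ) 1, |DD G x| ≤ C := by
    obtain ⟨C, hC⟩ := (isCompact_Icc (a := (0:ℝ)) (b := 1)).exists_bound_of_continuousOn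
      ((DD_continuousOn hG).mono Icc_subset_Ici_self)
    exact ⟨C, fun x hx => hC x hx⟩
  have hlip : ∀ y ∈ Icc (0:ℝ) 1, |G y - G 0| ≤ C * y := by
    intro y hy
    have := Convex.norm_image_sub_le_of_norm_hasDerivWithin_le (s := Icc (0:ℝ) 1)
      (f := G) (f' := DD G) (C := C)
      (fun x hx => ((hG.differentiableOn one_ne_zero x hx.1).hasDerivWithinAt).mono
        (Icc_subset_Ici_self))
      (fun x hx => by rw [Real.norm_eq_abs]; exact hC x hx)
      (convex_Icc 0 1) (left_mem_Icc.mpr zero_le_one) hy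
    rw [Real.norm_eq_abs, Real.norm_eq_abs, sub_zero, abs_of_nonneg hy.1] at this
    exact this
  rw [hasDerivWithinAt_iff_tendsto_slope, show (Ici (0:ℝ) \ {0}) = Ioi 0 from Ici_sdiff_left]
  have hmain : Tendsto (fun r => ∫ t in (0:ℝ)..1, (t ^ j * G (r * t) - t ^ j * G 0) / r)
      (𝓝[Ioi 0] 0) (𝓝 (∫ t in (0:ℝ)..1, t ^ (j+1) * DD G (0 * t))) := by
    apply intervalIntegral.tendsto_integral_filter_of_dominated_convergence (fun _ => |C|)
    · filter_upwards [self_mem_nhdsWithin] with r (hr : 0 < r)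
      have : ContinuousOn (fun t : ℝ => (t ^ j * G (r * t) - t ^ j * G 0) / r) (Icc 0 1) := by
        apply ContinuousOn.div_const
        apply ContinuousOn.sub _ (by fun_prop)
        apply ContinuousOn.mul (by fun_prop)
        apply hG.continuousOn.comp (by fun_prop)
        intro t ht; exact mul_nonneg hr.le ht.1
      exact (this.mono (by rw [uIoc_of_le (zero_le_one)]; exact Ioc_subset_Icc_self
        )).aestronglyMeasurable measurableSet_uIoc
    · have h1 : Iio (1:ℝ) ∈ 𝓝[Ioi 0] (0:ℝ) :=
        nhdsWithin_le_nhds (Iio_mem_nhds one_pos)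
      filter_upwards [self_mem_nhdsWithin, h1] with r (hr : 0 < r) (hr1 : r < 1)
      refine Eventually.of_forall fun t ht => ?_
      rw [uIoc_of_le (zero_le_one)] at ht
      have ht0 : 0 < t := ht.1
      have hrt : r * t ∈ Icc (0:ℝ) 1 := ⟨mul_nonneg hr.le ht0.le,
        le_trans (mul_le_one₀ hr1.le ht0.le ht.2) le_rfl⟩
      have h2 : |t ^ j * G (r * t) - t ^ j * G 0| = t ^ j * |G (r * t) - G 0| := by
        rw [← mul_sub, abs_mul, abs_pow, abs_of_nonneg ht0.le]
      calc |(t ^ j * G (r * t) - t ^ j * G 0) / r|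
          = t ^ j * |G (r * t) - G 0| / r := by rw [abs_div, abs_of_pos hr, h2]
        _ ≤ t ^ j * (C * (r * t)) / r := by
            gcongr
            exact hlip _ hrt
        _ = C * t ^ (j+1) := by field_simp; ring
        _ ≤ |C| * t ^ (j+1) := by
            gcongr
            exact le_abs_self C
        _ ≤ |C| * 1 := by
            gcongr
            exact pow_le_one₀ ht0.le ht.2
        _ = |C| := mul_one _
    · exact intervalIntegrable_const
    · refine Eventually.of_forall fun t ht => ?_
      rw [uIoc_of_le (zero_le_one)] at ht
      have ht0 : 0 < t := ht.1
      have hG0 : HasDerivWithinAt G (DD G 0) (Ici 0) 0 :=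
        (hG.differentiableOn one_ne_zero 0 self_mem_Ici).hasDerivWithinAt
      have hslope : Tendsto (slope G 0) (𝓝[Ioi 0] 0) (𝓝 (DD G 0)) := by
        have := hasDerivWithinAt_iff_tendsto_slope.mp hG0
        rwa [show (Ici (0:ℝ) \ {0}) = Ioi 0 from Ici_sdiff_left] at this
      have hcomp : Tendsto (fun r : ℝ => r * t) (𝓝[Ioi 0] 0) (𝓝[Ioi 0] 0) := by
        rw [tendsto_nhdsWithin_iff]
        constructor
        · have h5 : Tendsto (fun r : ℝ => r * t) (𝓝 0) (𝓝 0) := by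
            simpa using (continuous_mul_right t).tendsto (0:ℝ)
          exact h5.mono_left nhdsWithin_le_nhds
        · filter_upwards [self_mem_nhdsWithin] with r (hr : 0 < r)
          exact mul_pos hr ht0
      have h4 : Tendsto (fun r : ℝ => t ^ (j+1) * slope G 0 (r * t)) (𝓝[Ioi 0] 0)
          (𝓝 (t ^ (j+1) * DD G 0)) :=
        (hslope.comp hcomp).const_mul _
      rw [zero_mul]
      apply h4.congr'
      filter_upwards [self_mem_nhdsWithin] with r (hr : 0 < r)
      have hrt : r * t ≠ 0 := (mul_pos hr ht0).ne'
      rw [slope_def_field]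
      field_simp
      ring
  -- identify the two sides
  have hid : (fun r => ∫ t in (0:ℝ)..1, (t ^ j * G (r * t) - t ^ j * G 0) / r)
      =ᶠ[𝓝[Ioi 0] 0] slope (Ifun j G) 0 := by
    filter_upwards [self_mem_nhdsWithin] with r (hr : 0 < r)
    have hc1 : ContinuousOn (fun t : ℝ => t ^ j * G (r * t)) (uIcc 0 1) := by
      rw [uIcc_of_le zero_le_one]
      apply ContinuousOn.mul (by fun_prop)
      apply hG.continuousOn.comp (by fun_prop)
      intro t ht; exact mul_nonneg hr.le ht.1
    have hc2 : ContinuousOn (fun t : ℝ => t ^ j * G (0 * t)) (uIcc 0 1) := by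
      simp only [zero_mul]
      fun_prop
    have key : Ifun j G r - Ifun j G 0
        = ∫ t in (0:ℝ)..1, (t ^ j * G (r * t) - t ^ j * G (0 * t)) :=
      (intervalIntegral.integral_sub hc1.intervalIntegrable hc2.intervalIntegrable).symm
    simp only [zero_mul] at key
    rw [slope_def_field, sub_zero, key, ← intervalIntegral.integral_div]
  have hval2 : (∫ t in (0:ℝ)..1, t ^ (j+1) * DD G (0 * t)) = Ifun (j+1) (DD G) 0 := rfl
  exact hval2 ▸ (hmain.congr' hid)

lemma Ifun_hasDerivWithinAt {j : ℕ} {G : ℝ → ℝ} (hG : ContDiffOn ℝ 1 G (Ici 0)) {r : ℝ}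
    (hr : r ∈ Ici (0:ℝ)) :
    HasDerivWithinAt (Ifun j G) (Ifun (j+1) (DD G) r) (Ici 0) r := by
  rcases eq_or_lt_of_le (mem_Ici.mp hr) with h | h
  · exact h ▸ Ifun_hasDerivWithinAt_zero hG
  · exact (Ifun_hasDerivAt hG h).hasDerivWithinAt

lemma Ifun_derivWithin {j : ℕ} {G : ℝ → ℝ} (hG : ContDiffOn ℝ 1 G (Ici 0)) {r : ℝ}
    (hr : r ∈ Ici (0:ℝ)) :
    derivWithin (Ifun j G) (Ici 0) r = Ifun (j+1) (DD G) r :=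
  (Ifun_hasDerivWithinAt hG hr).derivWithin (uniqueDiffOn_Ici 0 r hr)
lemma Ifun_contDiffOn : ∀ (n : ℕ) (j : ℕ) (G : ℝ → ℝ), ContDiffOn ℝ n G (Ici 0) →
    ContDiffOn ℝ n (Ifun j G) (Ici 0) := by
  intro n
  induction n with
  | zero =>
    intro j G hG
    rw [show (((0:ℕ) : WithTop ℕ∞)) = 0 from rfl, contDiffOn_zero] at hG ⊢
    exact Ifun_continuousOn hG
  | succ n ih =>
    intro j G hG
    have h1 : ContDiffOn ℝ 1 G (Ici 0) := hG.of_le (by exact_mod_cast Nat.one_le_iff_ne_zero.mpr (Nat.succ_ne_zero n))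
    have hcast : ((n+1 : ℕ) : WithTop ℕ∞) = (n : WithTop ℕ∞) + 1 := by push_cast; ring
    rw [hcast, contDiffOn_succ_iff_derivWithin (uniqueDiffOn_Ici 0)]
    refine ⟨fun r hr => (Ifun_hasDerivWithinAt h1 hr).differentiableWithinAt, by simp, ?_⟩
    have hDG : ContDiffOn ℝ n (DD G) (Ici 0) := by
      apply hG.derivWithin (uniqueDiffOn_Ici 0)
      rw [hcast]
    exact (ih (j+1) (DD G) hDG).congr fun r hr => Ifun_derivWithin h1 hr




noncomputable def lapl (N : ℕ) (f : ℝ → ℝ) : ℝ → ℝ :=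
  fun r => DD (DD f) r + ((N:ℝ) - 1) * Ifun 0 (DD (DD f)) r

lemma DD_contDiffOn {n : ℕ} {f : ℝ → ℝ} (hf : ContDiffOn ℝ (n+1 : ℕ) f (Ici 0)) :
    ContDiffOn ℝ n (DD f) (Ici 0) := by
  apply hf.derivWithin (uniqueDiffOn_Ici 0)
  exact_mod_cast le_rfl

lemma DD_one_continuousOn {f : ℝ → ℝ} (hf : ContDiffOn ℝ (1:ℕ) f (Ici 0)) :
    ContinuousOn (DD f) (Ici 0) := by
  have := DD_contDiffOn (n := 0) hf
  rwa [show (((0:ℕ)) : WithTop ℕ∞) = 0 from rfl, contDiffOn_zero] at this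

lemma lapl_contDiffOn {n : ℕ} {N : ℕ} {f : ℝ → ℝ}
    (hf : ContDiffOn ℝ (n+2 : ℕ) f (Ici 0)) :
    ContDiffOn ℝ n (lapl N f) (Ici 0) := by
  have h1 : ContDiffOn ℝ (n+1:ℕ) (DD f) (Ici 0) := DD_contDiffOn (by exact_mod_cast hf)
  have h2 : ContDiffOn ℝ n (DD (DD f)) (Ici 0) := DD_contDiffOn h1
  exact h2.add (contDiffOn_const.mul (Ifun_contDiffOn n 0 _ h2))

lemma DD_eq_deriv {f : ℝ → ℝ} {r : ℝ} (hr : 0 < r) : DD f r = deriv f r :=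
  derivWithin_of_mem_nhds (Ici_mem_nhds hr)

/-- On `(0,∞)`, `I_0 (f'') r = f' r / r` provided `f'(0) = 0`. -/
lemma Ifun0_eq {f : ℝ → ℝ} (hf : ContDiffOn ℝ (2:ℕ) f (Ici 0)) (hf0 : DD f 0 = 0)
    {r : ℝ} (hr : 0 < r) :
    Ifun 0 (DD (DD f)) r = DD f r / r := by
  have h1 : ContDiffOn ℝ (1:ℕ) (DD f) (Ici 0) := DD_contDiffOn (by exact_mod_cast hf)
  have hDDc : ContinuousOn (DD f) (Ici 0) := h1.continuousOn
  have hDD2c : ContinuousOn (DD (DD f)) (Ici 0) := DD_one_continuousOn h1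
  rw [Ifun_eq_of_pos _ hr]
  have hint : ∫ s in (0:ℝ)..r, s ^ 0 * DD (DD f) s = DD f r - DD f 0 := by
    simp only [pow_zero, one_mul]
    apply ftc2 hr.le (hDDc.mono Icc_subset_Ici_self) (hDD2c.mono Icc_subset_Ici_self)
    intro x hx
    exact DD_hasDerivAt (h1.differentiableOn (by norm_num)) hx.1
  rw [hint, hf0, sub_zero, pow_one]

lemma lapl_eq_of_pos {N : ℕ} {f : ℝ → ℝ} (hf : ContDiffOn ℝ (2:ℕ) f (Ici 0))
    (hf0 : DD f 0 = 0) {r : ℝ} (hr : 0 < r) :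
    lapl N f r = deriv (deriv f) r + ((N:ℝ) - 1) / r * deriv f r := by
  have h1 : ContDiffOn ℝ (1:ℕ) (DD f) (Ici 0) := DD_contDiffOn (by exact_mod_cast hf)
  have heq : DD f =ᶠ[𝓝 r] deriv f := by
    filter_upwards [Ioi_mem_nhds hr] with x hx
    exact DD_eq_deriv hx
  have h2 : DD (DD f) r = deriv (deriv f) r := by
    rw [DD_eq_deriv hr, heq.deriv_eq]
  rw [lapl, h2, Ifun0_eq hf hf0 hr, DD_eq_deriv hr]
  field_simp

/-- Transfer: if `F` agrees with `f` on `(0,∞)` then `rlap N F` agrees with `lapl N f` there. -/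
lemma rlap_eq_lapl_of_pos {N : ℕ} {F f : ℝ → ℝ} (hFf : EqOn F f (Ioi 0))
    (hf : ContDiffOn ℝ (2:ℕ) f (Ici 0)) (hf0 : DD f 0 = 0) {r : ℝ} (hr : 0 < r) :
    rlap N F r = lapl N f r := by
  have hder : EqOn (deriv F) (deriv f) (Ioi 0) := by
    intro x hx
    exact Filter.EventuallyEq.deriv_eq (by filter_upwards [Ioi_mem_nhds hx] with y hy; exact hFf hy)
  have hder2 : deriv (deriv F) r = deriv (deriv f) r :=
    Filter.EventuallyEq.deriv_eq (by filter_upwards [Ioi_mem_nhds hr] with y hy; exact hder hy)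
  rw [rlap, if_neg hr.ne', hder2, hder hr, lapl_eq_of_pos hf hf0 hr]

lemma rlap_zero_eq {N : ℕ} {F f : ℝ → ℝ} (hFf : EqOn F f (Ioi 0))
    (hf : ContDiffOn ℝ (2:ℕ) f (Ici 0)) (hf0 : DD f 0 = 0) :
    rlap N F 0 = lapl N f 0 := by
  have hcont : ContinuousOn (lapl N f) (Ici 0) := by
    have := lapl_contDiffOn (n := 0) (N := N) (by exact_mod_cast hf)
    rwa [show (((0:ℕ)) : WithTop ℕ∞) = 0 from rfl, contDiffOn_zero] at this
  have htend : Tendsto (lapl N f) (𝓝[Ioi 0] 0) (𝓝 (lapl N f 0)) :=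
    (hcont 0 self_mem_Ici).mono_left (nhdsWithin_mono 0 Ioi_subset_Ici_self)
  have heq : (fun s => deriv (deriv F) s + ((N:ℝ) - 1) / s * deriv F s)
      =ᶠ[𝓝[Ioi 0] 0] lapl N f := by
    filter_upwards [self_mem_nhdsWithin] with s (hs : 0 < s)
    have := rlap_eq_lapl_of_pos (N := N) hFf hf hf0 hs
    rwa [rlap, if_neg hs.ne'] at this
  rw [rlap, if_pos rfl]
  exact (htend.congr' heq.symm).limUnder_eq

lemma hasDerivAt_pow_mul_DD {N : ℕ} (hN : 2 ≤ N) {f : ℝ → ℝ}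
    (hf : ContDiffOn ℝ (2:ℕ) f (Ici 0)) (hf0 : DD f 0 = 0) {r : ℝ} (hr : 0 < r) :
    HasDerivAt (fun x => x ^ (N-1) * DD f x) (r ^ (N-1) * lapl N f r) r := by
  have h1 : ContDiffOn ℝ (1:ℕ) (DD f) (Ici 0) := DD_contDiffOn (by exact_mod_cast hf)
  have hD : HasDerivAt (DD f) (DD (DD f) r) r :=
    DD_hasDerivAt (h1.differentiableOn (by norm_num)) hr
  have hp : HasDerivAt (fun x : ℝ => x ^ (N-1)) (((N-1 : ℕ):ℝ) * r ^ (N-1-1)) r :=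
    hasDerivAt_pow (N-1) r
  have hmul := hp.mul hD
  refine hmul.congr_deriv ?_
  symm
  rw [lapl, Ifun0_eq hf hf0 hr]
  have h2 : r ^ (N-1) = r * r ^ (N-2) := by
    rw [show N - 1 = (N-2)+1 from by omega, pow_succ']
  have hc : ((N-1:ℕ):ℝ) = (N:ℝ) - 1 := by
    have h3 : (1:ℕ) ≤ N := by omega
    push_cast [Nat.cast_sub h3]
    ring
  rw [show N - 1 - 1 = N - 2 from by omega] at hmul ⊢
  rw [h2, hc]
  field_simp
  ring

lemma neg_step {N : ℕ} (hN : 2 ≤ N) {f P dP : ℝ → ℝ} {LP : ℝ → ℝ}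
    (hf : ContDiffOn ℝ (2:ℕ) f (Ici 0)) (hf0 : DD f 0 = 0)
    (hP : Continuous P) (hdP : Continuous dP)
    (hPd : ∀ r, 0 < r → HasDerivAt P (dP r) r)
    (hLPd : ∀ r, 0 < r → HasDerivAt (fun x => x ^ (N-1) * dP x) (r ^ (N-1) * LP r) r)
    (hzero : f 0 = P 0)
    (hneg : ∀ r, 0 < r → lapl N f r < LP r) :
    ∀ r, 0 < r → f r < P r := by
  have h1 : ContDiffOn ℝ (1:ℕ) (DD f) (Ici 0) := DD_contDiffOn (by exact_mod_cast hf)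
  set q : ℝ → ℝ := fun x => x ^ (N-1) * DD f x - x ^ (N-1) * dP x with hq
  have hqc : ContinuousOn q (Ici 0) := by
    apply ContinuousOn.sub
    · exact (continuous_pow (N-1)).continuousOn.mul h1.continuousOn
    · exact ((continuous_pow (N-1)).mul hdP).continuousOn
  have hq0 : q 0 = 0 := by
    simp [hq, zero_pow (by omega : N - 1 ≠ 0)]
  have hqd : ∀ x ∈ interior (Ici (0:ℝ)), deriv q x < 0 := by
    rw [interior_Ici]
    intro x hx
    have hd : HasDerivAt q (x ^ (N-1) * lapl N f x - x ^ (N-1) * LP x) x :=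
      (hasDerivAt_pow_mul_DD hN hf hf0 hx).sub (hLPd x hx)
    rw [hd.deriv]
    have hxp : 0 < x ^ (N-1) := pow_pos hx _
    nlinarith [hneg x hx]
  have hanti : StrictAntiOn q (Ici 0) := strictAntiOn_of_deriv_neg (convex_Ici 0) hqc hqd
  have hqneg : ∀ x, 0 < x → q x < 0 := fun x hx => by
    have := hanti self_mem_Ici (le_of_lt hx : (0:ℝ) ≤ x) hx
    rwa [hq0] at this
  have hwd : ∀ x ∈ interior (Ici (0:ℝ)), deriv (fun y => f y - P y) x < 0 := by
    rw [interior_Ici]; intro x hx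
    have hfd : HasDerivAt f (DD f x) x :=
      DD_hasDerivAt (hf.differentiableOn (by norm_num)) hx
    have hd : HasDerivAt (fun y => f y - P y) (DD f x - dP x) x := hfd.sub (hPd x hx)
    rw [hd.deriv]
    have hxp : 0 < x ^ (N-1) := pow_pos hx _
    have hq2 := hqneg x hx
    rw [hq] at hq2
    simp only at hq2
    nlinarith
  have hwc : ContinuousOn (fun y => f y - P y) (Ici 0) := hf.continuousOn.sub hP.continuousOn
  have hanti2 : StrictAntiOn (fun y => f y - P y) (Ici 0) :=
    strictAntiOn_of_deriv_neg (convex_Ici 0) hwc hwd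
  intro r hr
  have hfin := hanti2 self_mem_Ici (le_of_lt hr : (0:ℝ) ≤ r) hr
  simp only at hfin
  rw [hzero] at hfin
  linarith

lemma iterates_invariant {m : ℕ} (hm : 3 ≤ m) {u : ℝ → ℝ}
    (hu : ContDiffOn ℝ (2*m : ℕ) u (Ici 0))
    (hd : ∀ i < m, derivWithin ((rlap (2*m))^[i] u) (Ici 0) 0 = 0) :
    ∀ k, k ≤ m - 1 →
      ContDiffOn ℝ (2*(m-k) : ℕ) ((lapl (2*m))^[k] u) (Ici 0) ∧
      EqOn ((lapl (2*m))^[k] u) ((rlap (2*m))^[k] u) (Ioi 0) ∧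
      DD ((lapl (2*m))^[k] u) 0 = 0 ∧
      (rlap (2*m))^[k] u 0 = (lapl (2*m))^[k] u 0 := by
  intro k
  induction k with
  | zero =>
    intro _
    refine ⟨by simpa using hu, by simp [EqOn], ?_, by simp⟩
    have := hd 0 (by omega)
    simpa [DD] using this
  | succ k ih =>
    intro hk1
    have hk : k ≤ m - 1 := by omega
    obtain ⟨hs, heq, hDD0, hval⟩ := ih hk
    have h2 : ContDiffOn ℝ (2:ℕ) ((lapl (2*m))^[k] u) (Ici 0) :=
      hs.of_le (by exact_mod_cast Nat.cast_le.mpr (by omega : 2 ≤ 2*(m-k)))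
    have hEq' : EqOn ((rlap (2*m))^[k] u) ((lapl (2*m))^[k] u) (Ioi 0) := heq.symm
    have heqS : EqOn ((lapl (2*m))^[k+1] u) ((rlap (2*m))^[k+1] u) (Ioi 0) := by
      intro r hr
      rw [Function.iterate_succ_apply', Function.iterate_succ_apply']
      exact (rlap_eq_lapl_of_pos hEq' h2 hDD0 hr).symm
    have hvalS : (rlap (2*m))^[k+1] u 0 = (lapl (2*m))^[k+1] u 0 := by
      rw [Function.iterate_succ_apply', Function.iterate_succ_apply']
      exact rlap_zero_eq hEq' h2 hDD0
    have hsS : ContDiffOn ℝ (2*(m-(k+1)) : ℕ) ((lapl (2*m))^[k+1] u) (Ici 0) := by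
      rw [Function.iterate_succ_apply']
      apply lapl_contDiffOn
      have hee : (2*(m-(k+1)) + 2 : ℕ) = 2*(m-k) := by omega
      rw [hee]
      exact hs
    refine ⟨hsS, heqS, ?_, hvalS⟩
    have hEqIci : EqOn ((rlap (2*m))^[k+1] u) ((lapl (2*m))^[k+1] u) (Ici 0) := by
      intro x hx
      rcases eq_or_lt_of_le (mem_Ici.mp hx) with h | h
      · rw [← h]; exact hvalS
      · exact (heqS h).symm
    have := hd (k+1) (by omega)
    rw [DD, ← derivWithin_congr hEqIci (hEqIci self_mem_Ici)]
    exact this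

noncomputable def Acoef (m : ℕ) : ℕ → ℝ := fun k =>
  ∏ i ∈ Finset.range k, (((2*(m-1-i) : ℕ) : ℝ) * ((2*(m-1-i) + 2*m - 2 : ℕ) : ℝ))

lemma Acoef_zero (m : ℕ) : Acoef m 0 = 1 := by simp [Acoef]

lemma Acoef_succ (m k : ℕ) : Acoef m (k+1)
    = Acoef m k * (((2*(m-1-k):ℕ):ℝ) * ((2*(m-1-k) + 2*m - 2 : ℕ):ℝ)) :=
  Finset.prod_range_succ _ _

lemma Acoef_last {m : ℕ} (hm : 3 ≤ m) :
    Acoef m (m-1) = 4^(m-1) * ∏ k ∈ Finset.Icc 1 (m-1), ((k : ℝ) * ((m : ℝ) - 1 + (k : ℝ))) := by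
  set n := m - 1 with hn
  have hm1 : (m:ℝ) - 1 = (n:ℝ) := by
    rw [hn, Nat.cast_sub (by omega : 1 ≤ m)]; push_cast; ring
  set F : ℕ → ℝ := fun j => 4 * (j:ℝ) * ((n:ℝ) + (j:ℝ)) with hF
  have hterm : ∀ i ∈ Finset.range n, (((2*(m-1-i) : ℕ) : ℝ) * ((2*(m-1-i) + 2*m - 2 : ℕ) : ℝ))
      = F (n - i) := by
    intro i hi
    have hi' : i < n := Finset.mem_range.mp hi
    have h2 : ((2*(m-1-i) : ℕ) : ℝ) = 2 * ((n:ℝ) - (i:ℝ)) := by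
      rw [show m-1-i = n-i from rfl, Nat.cast_mul, Nat.cast_sub hi'.le]; push_cast; ring
    have h3 : ((2*(m-1-i) + 2*m - 2 : ℕ) : ℝ) = 2 * ((n:ℝ) - (i:ℝ)) + 2*(n:ℝ) := by
      rw [show 2*(m-1-i) + 2*m - 2 = 2*(n-i) + 2*n from by omega, Nat.cast_add,
        Nat.cast_mul, Nat.cast_mul, Nat.cast_sub hi'.le]
      push_cast; ring
    have h4 : ((n - i : ℕ) : ℝ) = (n:ℝ) - (i:ℝ) := by
      rw [Nat.cast_sub hi'.le]
    rw [h2, h3, hF]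
    simp only [h4]
    ring
  rw [Acoef, Finset.prod_congr rfl hterm]
  have hreflect : ∏ i ∈ Finset.range n, F (n - i) = ∏ i ∈ Finset.range n, F (i+1) := by
    have h5 : ∀ i ∈ Finset.range n, F (n - i) = (fun j => F (j+1)) (n - 1 - i) := by
      intro i hi
      have hi' : i < n := Finset.mem_range.mp hi
      have : n - 1 - i + 1 = n - i := by omega
      simp only [this]
    rw [Finset.prod_congr rfl h5]
    exact Finset.prod_range_reflect (fun j => F (j+1)) n
  rw [hreflect]
  have hIcc : ∏ k ∈ Finset.Icc 1 n, (F k) = ∏ i ∈ Finset.range n, F (i+1) := by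
    rw [← Finset.Ico_add_one_right_eq_Icc, Finset.prod_Ico_eq_prod_range]
    have : n + 1 - 1 = n := by omega
    rw [this]
    apply Finset.prod_congr rfl
    intro i _
    rw [Nat.add_comm]
  have hsplit : ∏ k ∈ Finset.Icc 1 n, F k
      = 4^n * ∏ k ∈ Finset.Icc 1 n, ((k : ℝ) * ((n:ℝ) + (k:ℝ))) := by
    rw [hF]
    rw [show (fun j : ℕ => 4 * (j:ℝ) * ((n:ℝ) + (j:ℝ))) = fun j : ℕ => 4 * ((j:ℝ) * ((n:ℝ) + (j:ℝ))) from by funext j; ring]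
    rw [Finset.prod_mul_distrib, Finset.prod_const, Nat.card_Icc]
    simp
  rw [← hIcc, hsplit, hm1]

noncomputable def psiF (m : ℕ) (b : ℝ) (k : ℕ) : ℝ → ℝ :=
  fun r => -(Acoef m k) * r ^ (2*(m-1-k)) + (if k = 0 then -b else 0)

noncomputable def dpsiF (m : ℕ) (k : ℕ) : ℝ → ℝ :=
  fun r => -(Acoef m k) * ((2*(m-1-k) : ℕ):ℝ) * r ^ (2*(m-1-k) - 1)

lemma psiF_continuous (m : ℕ) (b : ℝ) (k : ℕ) : Continuous (psiF m b k) :=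
  (continuous_const.mul (continuous_pow _)).add continuous_const

lemma dpsiF_continuous (m : ℕ) (k : ℕ) : Continuous (dpsiF m k) :=
  continuous_const.mul (continuous_pow _)

lemma psiF_hasDerivAt (m : ℕ) (b : ℝ) (k : ℕ) (r : ℝ) :
    HasDerivAt (psiF m b k) (dpsiF m k r) r := by
  have h := ((hasDerivAt_pow (2*(m-1-k)) r).const_mul (-(Acoef m k))).add_const
    (if k = 0 then -b else 0)
  refine h.congr_deriv ?_
  symm
  unfold dpsiF
  ring

lemma pow_mul_hasDerivAt {N e : ℕ} (hN : 2 ≤ N) (he : 2 ≤ e) (c : ℝ) (r : ℝ) :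
    HasDerivAt (fun x : ℝ => x ^ (N-1) * (c * ((e:ℕ):ℝ) * x ^ (e-1)))
      (r ^ (N-1) * ((c * ((e:ℕ):ℝ) * (((e + N - 2:ℕ)):ℝ)) * r ^ (e-2))) r := by
  have h1 : HasDerivAt (fun x : ℝ => (c * (e:ℝ)) * x ^ ((N-1)+(e-1)))
      ((c * (e:ℝ)) * ((((N-1)+(e-1) : ℕ)):ℝ) * r ^ ((N-1)+(e-1)-1)) r := by
    have h := (hasDerivAt_pow ((N-1)+(e-1)) r).const_mul (c * (e:ℝ))
    refine h.congr_deriv ?_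
    ring
  have heq : (fun x : ℝ => x ^ (N-1) * (c * (e:ℝ) * x ^ (e-1)))
      = fun x : ℝ => (c * (e:ℝ)) * x ^ ((N-1)+(e-1)) := by
    funext x; rw [pow_add]; ring
  rw [heq]
  convert h1 using 1
  have h2 : (N-1)+(e-1) - 1 = (N-1) + (e-2) := by omega
  have h3 : ((N-1)+(e-1) : ℕ) = (e + N - 2 : ℕ) := by omega
  rw [h2, h3, pow_add]
  ring

lemma dpsiF_step {m : ℕ} (hm : 3 ≤ m) (b : ℝ) {k : ℕ} (hk : k ≤ m - 2) (r : ℝ) :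
    HasDerivAt (fun x : ℝ => x ^ (2*m-1) * dpsiF m k x)
      (r ^ (2*m-1) * psiF m b (k+1) r) r := by
  have he : 2 ≤ 2*(m-1-k) := by omega
  have h := pow_mul_hasDerivAt (N := 2*m) (e := 2*(m-1-k)) (by omega) he (-(Acoef m k)) r
  refine h.congr_deriv ?_
  symm
  unfold psiF
  rw [if_neg (Nat.succ_ne_zero k), Acoef_succ]
  have h4 : 2*(m-1-(k+1)) = 2*(m-1-k) - 2 := by omega
  rw [h4]
  have h5 : (2*(m-1-k) + 2*m - 2 : ℕ) = (2*(m-1-k) + 2*m - 2 : ℕ) := rfl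
  push_cast
  ring

lemma main_bound {m : ℕ} (hm : 3 ≤ m) {b : ℝ} {u : ℝ → ℝ}
    (hu : ContDiffOn ℝ (2*m : ℕ) u (Ici 0))
    (hpde : ∀ r : ℝ, 0 < r → (rlap (2*m))^[m] u r = -Real.exp (u r))
    (hd : ∀ i < m, derivWithin ((rlap (2*m))^[i] u) (Ici 0) 0 = 0)
    (hu0 : u 0 = -b)
    (hmid : ∀ k, 1 ≤ k → k ≤ m - 2 → (rlap (2*m))^[k] u 0 = 0)
    (hlast : (rlap (2*m))^[m-1] u 0 = -(Acoef m (m-1))) :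
    ∀ r : ℝ, 0 < r → u r < -r^(2*(m-1)) - b := by
  have hN : 2 ≤ 2*m := by omega
  have inv := iterates_invariant hm hu hd
  -- negativity of the top level
  have htop : ∀ r, 0 < r → lapl (2*m) ((lapl (2*m))^[m-1] u) r < 0 := by
    intro r hr
    obtain ⟨hs, heq, hDD0, hval⟩ := inv (m-1) le_rfl
    have h2 : ContDiffOn ℝ (2:ℕ) ((lapl (2*m))^[m-1] u) (Ici 0) := by
      apply hs.of_le
      exact_mod_cast Nat.cast_le.mpr (by omega : 2 ≤ 2*(m-(m-1)))
    have h3 : rlap (2*m) ((rlap (2*m))^[m-1] u) r = lapl (2*m) ((lapl (2*m))^[m-1] u) r :=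
      rlap_eq_lapl_of_pos heq.symm h2 hDD0 hr
    have h4 := hpde r hr
    rw [show m = m-1+1 from by omega] at h4
    rw [Function.iterate_succ_apply'] at h4
    rw [show m-1+1 = m from by omega] at h4
    rw [h4] at h3
    rw [← h3]
    have := Real.exp_pos (u r)
    linarith
  -- the downward chain
  have chain : ∀ j, j ≤ m - 1 → ∀ r, 0 < r →
      (lapl (2*m))^[m-1-j] u r < psiF m b (m-1-j) r := by
    intro j
    induction j with
    | zero =>
      intro _
      simp only [Nat.sub_zero]
      obtain ⟨hs, heq, hDD0, hval⟩ := inv (m-1) le_rfl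
      have h2 : ContDiffOn ℝ (2:ℕ) ((lapl (2*m))^[m-1] u) (Ici 0) := by
        apply hs.of_le
        exact_mod_cast Nat.cast_le.mpr (by omega : 2 ≤ 2*(m-(m-1)))
      apply neg_step hN h2 hDD0 (psiF_continuous m b (m-1)) (dpsiF_continuous m (m-1))
        (fun r hr => psiF_hasDerivAt m b (m-1) r) (LP := fun _ => (0:ℝ))
      · -- hLPd
        intro r hr
        have hzero : ∀ x : ℝ, x ^ (2*m-1) * dpsiF m (m-1) x = 0 := by
          intro x
          unfold dpsiF
          rw [show 2*(m-1-(m-1)) = 0 from by omega]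
          norm_num
        have h5 : HasDerivAt (fun x : ℝ => x ^ (2*m-1) * dpsiF m (m-1) x) 0 r := by
          apply (hasDerivAt_const r (0:ℝ)).congr_of_eventuallyEq
          filter_upwards with x
          rw [hzero x]
        rw [mul_zero]
        exact h5
      · -- hzero : value at 0
        rw [← hval, hlast]
        unfold psiF
        rw [if_neg (by omega : ¬ (m-1 = 0)), show 2*(m-1-(m-1)) = 0 from by omega, pow_zero]
        ring
      · -- hneg
        intro r hr
        exact htop r hr
    | succ j ih =>
      intro hj1
      have hk2 : m-1-(j+1) ≤ m - 2 := by omega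
      have hkk : m-1-j = (m-1-(j+1)) + 1 := by omega
      have ihj := ih (by omega)
      rw [hkk] at ihj
      obtain ⟨hs, heq, hDD0, hval⟩ := inv (m-1-(j+1)) (by omega)
      have h2 : ContDiffOn ℝ (2:ℕ) ((lapl (2*m))^[m-1-(j+1)] u) (Ici 0) := by
        apply hs.of_le
        exact_mod_cast Nat.cast_le.mpr (by omega : 2 ≤ 2*(m-(m-1-(j+1))))
      apply neg_step hN h2 hDD0 (psiF_continuous m b (m-1-(j+1)))
        (dpsiF_continuous m (m-1-(j+1)))
        (fun r hr => psiF_hasDerivAt m b (m-1-(j+1)) r)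
        (fun r hr => dpsiF_step hm b hk2 r)
      · -- value at 0
        by_cases hk0 : m-1-(j+1) = 0
        · rw [hk0]
          simp only [Function.iterate_zero_apply]
          rw [hu0]
          unfold psiF
          rw [if_pos rfl, show 2*(m-1-0) = 2*(m-1) from rfl,
            zero_pow (by omega : 2*(m-1) ≠ 0)]
          ring
        · rw [← hval, hmid _ (by omega) hk2]
          unfold psiF
          rw [if_neg hk0, zero_pow (by omega : 2*(m-1-(m-1-(j+1))) ≠ 0)]
          ring
      · -- hneg
        intro r hr
        have hit : (lapl (2*m))^[m-1-(j+1)+1] u r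
            = lapl (2*m) ((lapl (2*m))^[m-1-(j+1)] u) r := by
          rw [Function.iterate_succ_apply']
        rw [← hit]
        exact ihj r hr
  -- conclude with j = m-1
  intro r hr
  have := chain (m-1) le_rfl r hr
  rw [show m-1-(m-1) = 0 from by omega] at this
  simp only [Function.iterate_zero_apply] at this
  unfold psiF at this
  rw [if_pos rfl, Acoef_zero, show (m-1-0) = m-1 from rfl] at this
  linarith


/-- Let `m ≥ 3`, `c₀ = 4^{m-1} ∏_{k=1}^{m-1} k(m-1+k)`. For `b > 0` let
`ũ_b` be the radial solution of `Δ_{2m}^m u = -e^u` with `u(0) = -b`,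
`(Δ_{2m}^k u)(0) = 0` for `1 ≤ k ≤ m-2` and `(Δ_{2m}^{m-1} u)(0) = -c₀`. Then
`ũ_b(r) ≤ -r^{2m-2} - b` for all `r ≥ 0`, and consequently
`ω_{2m-1} ∫_0^∞ e^{ũ_b(r)} r^{2m-1} dr → 0` as `b → +∞`. -/
theorem volume_tendsto_zero_special_initial_data
    (m : ℕ) (hm : 3 ≤ m)
    (c₀ : ℝ)
    (hc₀ : c₀ = 4^(m-1) * ∏ k ∈ Finset.Icc 1 (m-1), ((k : ℝ) * ((m : ℝ) - 1 + (k : ℝ))))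
    (U : ℝ → ℝ → ℝ)
    (hU : ∀ b : ℝ, 0 < b → IsSpecialSol m (-c₀) b (U b)) :
    (∀ b : ℝ, 0 < b → ∀ r : ℝ, 0 ≤ r → U b r ≤ -r^(2*m-2) - b) ∧
    Tendsto (fun b : ℝ =>
        sphereVol (2*m) * ∫ r in Set.Ioi (0:ℝ), Real.exp (U b r) * r^(2*m-1))
      atTop (nhds 0) := by
  have hA : c₀ = Acoef m (m-1) := by rw [hc₀, Acoef_last hm]
  have hbound : ∀ b : ℝ, 0 < b → ∀ r : ℝ, 0 ≤ r → U b r ≤ -r^(2*m-2) - b := by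
    intro b hb r hr
    obtain ⟨hu, hpde, hd, hu0, hmid, hlast⟩ := hU b hb
    rcases eq_or_lt_of_le hr with h0 | h0
    · rw [← h0, hu0, zero_pow (by omega : 2*m-2 ≠ 0)]
      norm_num
    · have := main_bound hm hu hpde hd hu0 hmid (by rw [hlast, hA]) r h0
      rw [show 2*m-2 = 2*(m-1) from by omega]
      linarith
  refine ⟨hbound, ?_⟩
  -- integrability of the dominating function
  have hint : IntegrableOn (fun r : ℝ => Real.exp (-r^(2*m-2)) * r^(2*m-1)) (Ioi 0) := by
    have h := integrableOn_rpow_mul_exp_neg_rpow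
      (p := ((2*m-2 : ℕ):ℝ)) (s := ((2*m-1 : ℕ):ℝ))
      (by have : (0:ℝ) ≤ ((2*m-1:ℕ):ℝ) := Nat.cast_nonneg _; linarith)
      (by exact_mod_cast (by omega : 0 < 2*m-2))
    have heq : (fun x : ℝ => x ^ (((2*m-1 : ℕ)):ℝ) * Real.exp (-x ^ (((2*m-2:ℕ)):ℝ)))
        = fun r : ℝ => Real.exp (-r^(2*m-2)) * r^(2*m-1) := by
      funext x
      rw [Real.rpow_natCast, Real.rpow_natCast, mul_comm]
    rwa [heq] at h
  set C : ℝ := ∫ r in Set.Ioi (0:ℝ), Real.exp (-r^(2*m-2)) * r^(2*m-1) with hC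
  have hsv : 0 ≤ sphereVol (2*m) := by
    unfold sphereVol
    positivity
  have hCpos : 0 ≤ C := by
    apply setIntegral_nonneg measurableSet_Ioi
    intro x hx
    have hx' : (0:ℝ) < x := hx
    positivity
  apply squeeze_zero' (g := fun b : ℝ => sphereVol (2*m) * (Real.exp (-b) * C))
  · filter_upwards [eventually_gt_atTop (0:ℝ)] with b hb
    apply mul_nonneg hsv
    apply setIntegral_nonneg measurableSet_Ioi
    intro x hx
    have hx' : (0:ℝ) < x := hx
    positivity
  · filter_upwards [eventually_gt_atTop (0:ℝ)] with b hb
    apply mul_le_mul_of_nonneg_left _ hsv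
    obtain ⟨hu, _, _, _, _, _⟩ := hU b hb
    have hmeas : AEStronglyMeasurable (fun r : ℝ => Real.exp (U b r) * r^(2*m-1))
        (volume.restrict (Ioi 0)) := by
      apply ContinuousOn.aestronglyMeasurable _ measurableSet_Ioi
      apply ContinuousOn.mul
      · exact Real.continuous_exp.comp_continuousOn
          ((hu.continuousOn).mono Ioi_subset_Ici_self)
      · fun_prop
    have hdom : ∀ r ∈ Ioi (0:ℝ), Real.exp (U b r) * r^(2*m-1)
        ≤ Real.exp (-b) * (Real.exp (-r^(2*m-2)) * r^(2*m-1)) := by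
      intro r hr
      have h1 : Real.exp (U b r) ≤ Real.exp (-r^(2*m-2) - b) :=
        Real.exp_le_exp.mpr (hbound b hb r (le_of_lt hr))
      have h2 : (0:ℝ) ≤ r^(2*m-1) := pow_nonneg (le_of_lt hr) _
      calc Real.exp (U b r) * r^(2*m-1) ≤ Real.exp (-r^(2*m-2) - b) * r^(2*m-1) :=
            mul_le_mul_of_nonneg_right h1 h2
        _ = Real.exp (-b) * (Real.exp (-r^(2*m-2)) * r^(2*m-1)) := by
            rw [show -r ^ (2*m-2) - b = -b + -r^(2*m-2) from by ring, Real.exp_add]; ring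
    have hgint : IntegrableOn
        (fun r : ℝ => Real.exp (-b) * (Real.exp (-r^(2*m-2)) * r^(2*m-1))) (Ioi 0) :=
      hint.const_mul _
    have hfint : IntegrableOn (fun r : ℝ => Real.exp (U b r) * r^(2*m-1)) (Ioi 0) := by
      apply MeasureTheory.Integrable.mono hgint hmeas
      rw [ae_restrict_iff' measurableSet_Ioi]
      filter_upwards with r hr
      rw [Real.norm_eq_abs, Real.norm_eq_abs]
      have h2 : (0:ℝ) ≤ r^(2*m-1) := pow_nonneg (le_of_lt hr) _
      rw [abs_of_nonneg (by positivity), abs_of_nonneg (by positivity)]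
      exact hdom r hr
    calc ∫ r in Set.Ioi (0:ℝ), Real.exp (U b r) * r^(2*m-1)
        ≤ ∫ r in Set.Ioi (0:ℝ), Real.exp (-b) * (Real.exp (-r^(2*m-2)) * r^(2*m-1)) :=
          setIntegral_mono_on hfint hgint measurableSet_Ioi hdom
      _ = Real.exp (-b) * C := by rw [MeasureTheory.integral_const_mul]
  · have h1 : Tendsto (fun b : ℝ => Real.exp (-b) * C) atTop (𝓝 (0 * C)) :=
      Real.tendsto_exp_neg_atTop_nhds_zero.mul_const C
    have h2 : Tendsto (fun b : ℝ => sphereVol (2*m) * (Real.exp (-b) * C)) atTop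
        (𝓝 (sphereVol (2*m) * (0 * C))) := h1.const_mul _
    simpa using h2
end
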